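/- arXiv:1202.4352 — 13 statements merged into one kernel-verified Lean document; each statement's English description precedes it below -/
import Mathlib

section
/- Let μ be an atomless (diffuse) probability measure on ℝ with cumulative distribution function F(x) = μ((−∞, x]). For k ≥ 1 define the Rademacher function r̃_k : ℝ → ℝ by r̃_k(t) = Σ_{j=0}^{2^k−1} (−1)^j · 1_{(j·2^{−k}, (j+1)·2^{−k}]}(t). Then the sequence (r̃_k ∘ F)_{k≥1} is a mutually independent sequence of random variables on the probability space (ℝ, B(ℝ), μ); moreover for every k ≥ 1 and every ε ∈ {−1, 1}, μ({x : r̃_k(F(x)) = ε}) = 1/2. -/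
/-!
An atomless law pushes forward under its own distribution function `F` to the uniform law on
`(0, 1]`, so it suffices to study the Rademacher functions under Lebesgue measure. On the dyadic
interval `(n / 2^K, (n + 1) / 2^K]`, the function `r̃_k` (for `k ≤ K`) equals `(-1)` raised to
the binary digit of `n` in position `K - k`. Prescribing the signs of `r̃_k` for `k ∈ S`
therefore fixes `#S` of the `K` binary digits of `n`, which leaves `2^(K - #S)` intervals of
length `2^(-K)`: the event has probability `2^(-#S)`. With `S` a singleton this gives the
marginals, and with all signs `+1` it gives the independence of the events `{r̃_k ∘ F = 1}`,
of which the `r̃_k ∘ F` are almost surely affine functions.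
-/

open MeasureTheory ProbabilityTheory Set
open scoped Finset ENNReal

namespace ProbabilityTheory

variable {μ : Measure ℝ} [IsProbabilityMeasure μ] [NullSingletonClass μ]

lemma continuous_cdf : Continuous (cdf μ) := by
  refine continuous_iff_continuousAt.2 fun x => ?_
  rw [(monotone_cdf μ).continuousAt_iff_leftLim_eq_rightLim, (cdf μ).rightLim_eq]
  have h := (cdf μ).measure_singleton x
  rw [measure_cdf, measure_singleton, eq_comm, ENNReal.ofReal_eq_zero, sub_nonpos] at h
  exact le_antisymm ((monotone_cdf μ).leftLim_le le_rfl) h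

lemma measure_cdf_le {a : ℝ} (ha0 : 0 ≤ a) (ha1 : a < 1) :
    μ {x | cdf μ x ≤ a} = ENNReal.ofReal a := by
  set A := {x | cdf μ x ≤ a}
  rcases A.eq_empty_or_nonempty with hA | hA
  · have : a ≤ 0 := ge_of_tendsto' (tendsto_cdf_atBot μ) fun x =>
      (not_le.1 fun hx => hA.subset hx).le
    rw [hA, measure_empty, le_antisymm this ha0, ENNReal.ofReal_zero]
  obtain ⟨b, hb⟩ := ((tendsto_cdf_atTop μ).eventually (lt_mem_nhds ha1)).exists_forall_of_atTop
  have hbdd : BddAbove A := ⟨b, fun x hx => not_lt.1 fun hbx => (hb x hbx.le).not_ge hx⟩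
  have hc : sSup A ∈ A :=
    (isClosed_le continuous_cdf continuous_const).csSup_mem hA hbdd
  have hAc : A = Iic (sSup A) :=
    Subset.antisymm (fun x hx => le_csSup hbdd hx) fun x hx => (monotone_cdf μ hx).trans hc
  -- `cdf μ < a` would persist slightly to the right of `sSup A`, by continuity
  have hFc : cdf μ (sSup A) = a := by
    refine le_antisymm hc (not_lt.1 fun hlt => ?_)
    obtain ⟨x, hcx, hx⟩ :=
      ((continuous_cdf.tendsto _).eventually (gt_mem_nhds hlt)).exists_gt
    exact hcx.not_ge (le_csSup hbdd hx.le)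
  rw [hAc, ← ofReal_cdf, hFc]

theorem map_cdf : μ.map (cdf μ) = volume.restrict (Ioc 0 1) := by
  have : IsProbabilityMeasure (volume.restrict (Ioc (0 : ℝ) 1)) := ⟨by simp⟩
  refine Measure.ext_of_Iic _ _ fun a => ?_
  rw [Measure.map_apply (monotone_cdf μ).measurable measurableSet_Iic,
    Measure.restrict_apply measurableSet_Iic]
  rcases lt_or_ge a 1 with ha1 | ha1
  · rw [Iic_inter_Ioc_of_le ha1.le, Real.volume_Ioc, sub_zero]
    rcases lt_or_ge a 0 with ha0 | ha0
    · have hF : cdf μ ⁻¹' Iic a = ∅ :=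
        eq_empty_of_forall_notMem fun x hx => (ha0.trans_le (cdf_nonneg μ x)).not_ge hx
      rw [hF, measure_empty, ENNReal.ofReal_of_nonpos ha0.le]
    · exact measure_cdf_le ha0 ha1
  · have hF : cdf μ ⁻¹' Iic a = univ := eq_univ_of_forall fun x => (cdf_le_one μ x).trans ha1
    rw [hF, inter_eq_right.2 (Ioc_subset_Iic_self.trans (Iic_subset_Iic.2 ha1)), measure_univ,
      Real.volume_Ioc, sub_zero, ENNReal.ofReal_one]

end ProbabilityTheory

lemma card_filter_div_pow_mod_two (K : ℕ) (T : Finset ℕ) (hT : ∀ i ∈ T, i < K)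
    (q : ℕ → Fin 2) :
    #{n : Fin (2 ^ K) | ∀ i ∈ T, (n : ℕ) / 2 ^ i % 2 = q i} = 2 ^ (K - #T) := by
  have hdigits : #{n : Fin (2 ^ K) | ∀ i ∈ T, (n : ℕ) / 2 ^ i % 2 = q i} =
      #(Fintype.piFinset fun i : Fin K => if (i : ℕ) ∈ T then {q i} else Finset.univ) := by
    refine Finset.card_equiv finFunctionFinEquiv.symm fun n => ?_
    simp only [Finset.mem_filter, Finset.mem_univ, true_and, Fintype.mem_piFinset]
    constructor
    · intro h i
      split_ifs with hi
      · exact Finset.mem_singleton.2 (Fin.ext (by simpa using h i hi))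
      · exact Finset.mem_univ _
    · intro h i hi
      simpa [hi, Fin.ext_iff] using h ⟨i, hT i hi⟩
  rw [hdigits, Fintype.card_piFinset]
  simp only [apply_ite Finset.card, Finset.card_singleton, Finset.card_univ, Fintype.card_fin]
  rw [Finset.prod_ite, Finset.prod_const_one, one_mul, Finset.prod_const]
  have hcardT : #{i : Fin K | (i : ℕ) ∈ T} = #T := by
    rw [← Finset.card_attachFin T hT]
    congr 1
    ext i
    simp [Finset.mem_attachFin]
  have hsplit :=
    Finset.card_filter_add_card_filter_not (s := Finset.univ) fun i : Fin K => (i : ℕ) ∈ T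
  rw [hcardT, Finset.card_univ, Fintype.card_fin] at hsplit
  rw [show K - #T = #{i : Fin K | (i : ℕ) ∉ T} by omega]

lemma neg_one_pow_eq_neg_one_pow_iff_mod_two {m : ℕ} {b : Fin 2} :
    (-1 : ℝ) ^ m = (-1) ^ (b : ℕ) ↔ m % 2 = b := by
  rw [neg_one_pow_eq_pow_mod_two (R := ℝ) (n := m)]
  rcases Nat.mod_two_eq_zero_or_one m with h | h <;> fin_cases b <;> norm_num [h]

def dyadicIoc (k n : ℕ) : Set ℝ := Ioc ((n : ℝ) / 2 ^ k) ((n + 1 : ℝ) / 2 ^ k)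

noncomputable def rademacher (k : ℕ) (t : ℝ) : ℝ :=
  ∑ j ∈ Finset.range (2 ^ k), (-1 : ℝ) ^ j * (dyadicIoc k j).indicator (fun _ => 1) t

lemma mem_dyadicIoc {k n : ℕ} {t : ℝ} :
    t ∈ dyadicIoc k n ↔ (n : ℝ) < 2 ^ k * t ∧ 2 ^ k * t ≤ n + 1 := by
  rw [dyadicIoc, mem_Ioc, div_lt_iff₀' (by positivity), le_div_iff₀' (by positivity)]

lemma disjoint_dyadicIoc {k m n : ℕ} (h : m ≠ n) :
    Disjoint (dyadicIoc k m) (dyadicIoc k n) := by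
  refine Set.disjoint_left.2 fun t hm hn => h ?_
  rw [mem_dyadicIoc] at hm hn
  have h1 : (m : ℝ) < n + 1 := by linarith
  have h2 : (n : ℝ) < m + 1 := by linarith
  norm_cast at h1 h2
  omega

lemma volume_dyadicIoc (k n : ℕ) : volume (dyadicIoc k n) = 2⁻¹ ^ k := by
  rw [dyadicIoc, Real.volume_Ioc, ← sub_div, add_sub_cancel_left, one_div, ← inv_pow,
    ENNReal.ofReal_pow (by norm_num), ENNReal.ofReal_inv_of_pos two_pos, ENNReal.ofReal_ofNat]

lemma exists_mem_dyadicIoc (k : ℕ) {t : ℝ} (ht : t ∈ Ioc 0 1) :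
    ∃ n : Fin (2 ^ k), t ∈ dyadicIoc k n := by
  have hpos : 0 < 2 ^ k * t := mul_pos (by positivity) ht.1
  have hceil : 1 ≤ ⌈2 ^ k * t⌉₊ := Nat.one_le_iff_ne_zero.2 (Nat.ceil_pos.2 hpos).ne'
  have hle : ⌈2 ^ k * t⌉₊ ≤ 2 ^ k := Nat.ceil_le.2 (by
    push_cast; nlinarith [ht.2, pow_pos (two_pos (α := ℝ)) k])
  refine ⟨⟨⌈2 ^ k * t⌉₊ - 1, by omega⟩, mem_dyadicIoc.2 ?_⟩
  simp only [Nat.cast_sub hceil, Nat.cast_one]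
  constructor
  · linarith [Nat.ceil_lt_add_one hpos.le]
  · linarith [Nat.le_ceil (2 ^ k * t)]

lemma dyadicIoc_subset_Ioc {k n : ℕ} (hn : n < 2 ^ k) : dyadicIoc k n ⊆ Ioc 0 1 := by
  intro t ht
  rw [mem_dyadicIoc] at ht
  have hn' : (n : ℝ) + 1 ≤ 2 ^ k := by exact_mod_cast hn
  have hk : (0 : ℝ) < 2 ^ k := by positivity
  constructor <;> nlinarith [(Nat.cast_nonneg n : (0 : ℝ) ≤ n)]

lemma mem_dyadicIoc_div {k K n : ℕ} (hkK : k ≤ K) {t : ℝ} (ht : t ∈ dyadicIoc K n) :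
    t ∈ dyadicIoc k (n / 2 ^ (K - k)) := by
  rw [mem_dyadicIoc] at ht ⊢
  have hd : (0 : ℝ) < 2 ^ (K - k) := by positivity
  have hK : (2 : ℝ) ^ K = 2 ^ (K - k) * 2 ^ k := by rw [← pow_add, Nat.sub_add_cancel hkK]
  have hdiv_le : ((n / 2 ^ (K - k) : ℕ) : ℝ) * 2 ^ (K - k) ≤ n := by
    exact_mod_cast Nat.div_mul_le_self n _
  have hsucc_le : ((n : ℕ) : ℝ) + 1 ≤ ((n / 2 ^ (K - k) : ℕ) + 1 : ℝ) * 2 ^ (K - k) := by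
    have := Nat.lt_div_mul_add (a := n) (b := 2 ^ (K - k)) (by positivity)
    rw [add_mul, one_mul]
    exact_mod_cast this
  rw [hK, mul_assoc] at ht
  constructor <;> nlinarith

lemma rademacher_of_mem {k n : ℕ} (hn : n < 2 ^ k) {t : ℝ} (ht : t ∈ dyadicIoc k n) :
    rademacher k t = (-1) ^ n := by
  rw [rademacher, Finset.sum_eq_single_of_mem n (Finset.mem_range.2 hn) fun j _ hj => by
    rw [indicator_of_notMem ((disjoint_dyadicIoc hj).notMem_of_mem_right ht), mul_zero],
    indicator_of_mem ht, mul_one]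

lemma rademacher_of_mem_of_le {k K n : ℕ} (hkK : k ≤ K) (hn : n < 2 ^ K) {t : ℝ}
    (ht : t ∈ dyadicIoc K n) : rademacher k t = (-1) ^ (n / 2 ^ (K - k)) := by
  refine rademacher_of_mem (Nat.div_lt_of_lt_mul ?_) (mem_dyadicIoc_div hkK ht)
  rwa [← pow_add, Nat.sub_add_cancel hkK]

lemma rademacher_eq_neg_one_or_one (k : ℕ) {t : ℝ} (ht : t ∈ Ioc 0 1) :
    rademacher k t = -1 ∨ rademacher k t = 1 := by
  obtain ⟨n, hn⟩ := exists_mem_dyadicIoc k ht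
  rw [rademacher_of_mem n.isLt hn]
  exact (neg_one_pow_eq_or ℝ n).symm

lemma measurable_rademacher (k : ℕ) : Measurable (rademacher k) :=
  Finset.measurable_sum _ fun _ _ => (measurable_const.indicator measurableSet_Ioc).const_mul _

lemma biInter_rademacher_inter_Ioc {S : Finset ℕ} {K : ℕ} (hSK : ∀ k ∈ S, k ≤ K)
    (b : ℕ → Fin 2) :
    (⋂ k ∈ S, {t | rademacher k t = (-1) ^ (b k : ℕ)}) ∩ Ioc 0 1 =
      ⋃ n ∈ ({n : Fin (2 ^ K) | ∀ k ∈ S, (n : ℕ) / 2 ^ (K - k) % 2 = b k} : Finset _),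
        dyadicIoc K n := by
  ext t
  simp only [mem_inter_iff, mem_iInter, mem_ofPred_eq, mem_iUnion, Finset.mem_filter,
    Finset.mem_univ, true_and, exists_prop]
  constructor
  · rintro ⟨ht, h01⟩
    obtain ⟨n, hn⟩ := exists_mem_dyadicIoc K h01
    refine ⟨n, fun k hk => ?_, hn⟩
    rw [← neg_one_pow_eq_neg_one_pow_iff_mod_two,
      ← rademacher_of_mem_of_le (hSK k hk) n.isLt hn]
    exact ht k hk
  · rintro ⟨n, hdigits, hn⟩
    refine ⟨fun k hk => ?_, dyadicIoc_subset_Ioc n.isLt hn⟩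
    rw [rademacher_of_mem_of_le (hSK k hk) n.isLt hn, neg_one_pow_eq_neg_one_pow_iff_mod_two]
    exact hdigits k hk

lemma measurableSet_biInter_rademacher (S : Finset ℕ) (c : ℕ → ℝ) :
    MeasurableSet (⋂ k ∈ S, {t | rademacher k t = c k}) :=
  Finset.measurableSet_biInter S fun k _ => measurable_rademacher k (measurableSet_singleton _)

theorem volume_restrict_Ioc_biInter_rademacher {S : Finset ℕ} (hS : ∀ k ∈ S, 1 ≤ k)
    (b : ℕ → Fin 2) :
    volume.restrict (Ioc 0 1) (⋂ k ∈ S, {t | rademacher k t = (-1) ^ (b k : ℕ)}) =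
      2⁻¹ ^ #S := by
  set K := S.sup id
  have hSK : ∀ k ∈ S, k ≤ K := fun k hk => Finset.le_sup (f := id) hk
  have hcard : #S ≤ K := by
    simpa using Finset.card_le_card fun k hk => Finset.mem_Icc.2 ⟨hS k hk, hSK k hk⟩
  have hcount :
      #{n : Fin (2 ^ K) | ∀ k ∈ S, (n : ℕ) / 2 ^ (K - k) % 2 = b k} = 2 ^ (K - #S) := by
    have hinj : Set.InjOn (K - ·) S := fun i hi j hj hij => by
      have := hSK i hi; have := hSK j hj; simp only at hij; omega
    rw [← Finset.card_image_of_injOn hinj, ← card_filter_div_pow_mod_two K (S.image (K - ·))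
      (by simpa using fun k hk => Nat.sub_lt_self (hS k hk) (hSK k hk)) (fun i => b (K - i))]
    simp_rw [Finset.forall_mem_image]
    refine congrArg Finset.card (Finset.filter_congr fun n _ => forall₂_congr fun k hk => ?_)
    rw [Nat.sub_sub_self (hSK k hk)]
  rw [Measure.restrict_apply (measurableSet_biInter_rademacher S _),
    biInter_rademacher_inter_Ioc hSK,
    measure_biUnion_finset (fun m _ n _ hmn => disjoint_dyadicIoc (Fin.val_injective.ne hmn))
      fun n _ => measurableSet_Ioc]
  simp_rw [volume_dyadicIoc]
  rw [Finset.sum_const, hcount, nsmul_eq_mul]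
  calc ((2 ^ (K - #S) : ℕ) : ℝ≥0∞) * 2⁻¹ ^ K
      = (2 * 2⁻¹) ^ (K - #S) * 2⁻¹ ^ #S := by
        rw [mul_pow, mul_assoc, ← pow_add, Nat.sub_add_cancel hcard]
        push_cast
        rfl
    _ = 2⁻¹ ^ #S := by
        rw [ENNReal.mul_inv_cancel two_ne_zero ENNReal.ofNat_ne_top, one_pow, one_mul]

section

variable {μ : Measure ℝ} [IsProbabilityMeasure μ] [NullSingletonClass μ]

lemma measure_biInter_rademacher_comp_cdf {S : Finset ℕ} (hS : ∀ k ∈ S, 1 ≤ k)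
    (b : ℕ → Fin 2) :
    μ (⋂ k ∈ S, {x | rademacher k (cdf μ x) = (-1) ^ (b k : ℕ)}) = 2⁻¹ ^ #S := by
  rw [← volume_restrict_Ioc_biInter_rademacher hS b, ← map_cdf (μ := μ),
    Measure.map_apply (monotone_cdf μ).measurable (measurableSet_biInter_rademacher S _)]
  simp only [preimage_iInter₂, preimage_ofPred_eq]

lemma measure_rademacher_comp_cdf {k : ℕ} (hk : 1 ≤ k) (b : Fin 2) :
    μ {x | rademacher k (cdf μ x) = (-1) ^ (b : ℕ)} = 2⁻¹ := by
  simpa using measure_biInter_rademacher_comp_cdf (S := {k}) (by simpa using hk) fun _ => b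

lemma ae_cdf_mem_Ioc : ∀ᵐ x ∂μ, cdf μ x ∈ Ioc 0 1 :=
  ae_of_ae_map (monotone_cdf μ).measurable.aemeasurable
    (map_cdf (μ := μ) ▸ ae_restrict_mem measurableSet_Ioc)

theorem iIndepFun_rademacher_comp_cdf : iIndepFun (fun k => rademacher (k + 1) ∘ cdf μ) μ := by
  set E : ℕ → Set ℝ := fun k => {x | rademacher (k + 1) (cdf μ x) = 1}
  have hE : iIndepSet E μ := by
    refine (iIndepSet_iff_meas_biInter (f := E) fun k =>
      (measurable_rademacher _).comp (monotone_cdf μ).measurable (measurableSet_singleton _)).2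
      fun s => ?_
    have h := measure_biInter_rademacher_comp_cdf (μ := μ) (S := s.image (· + 1)) (by simp)
      fun _ => 0
    rw [Finset.set_biInter_finset_image, Finset.card_image_of_injective _ (add_left_injective 1)]
      at h
    simp only [Fin.val_zero, pow_zero] at h
    rw [h, Finset.prod_congr rfl fun k _ => by
      simpa using measure_rademacher_comp_cdf (μ := μ) (Nat.le_add_left 1 k) 0, Finset.prod_const]
  refine (hE.iIndepFun_indicator.comp (fun _ y => 2 * y - 1) fun _ => by fun_prop).congr
    fun k => ?_
  filter_upwards [ae_cdf_mem_Ioc] with x hx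
  rcases rademacher_eq_neg_one_or_one (k + 1) hx with h | h <;> norm_num [E, h]

end

/-- If `μ` is an atomless probability measure on `ℝ` with cdf `F`,
and `r k` is the `k`-th Rademacher function
`r k t = ∑_{j<2^k} (-1)^j · 1_{(j/2^k, (j+1)/2^k]}(t)`, then the sequence
`(r k ∘ F)_{k ≥ 1}` is mutually independent on `(ℝ, B(ℝ), μ)`, and each
`r k ∘ F` takes each of the values `±1` with probability `1/2`. -/
theorem stmt_1 (μ : Measure ℝ) [IsProbabilityMeasure μ]
    (hdiff : ∀ x : ℝ, μ {x} = 0)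
    (F : ℝ → ℝ) (hF : ∀ x, F x = (μ (Set.Iic x)).toReal)
    (r : ℕ → ℝ → ℝ)
    (hr : ∀ k t, r k t =
      ∑ j ∈ Finset.range (2 ^ k),
        (-1 : ℝ) ^ j *
          Set.indicator (Set.Ioc ((j : ℝ) / 2 ^ k) ((j + 1 : ℝ) / 2 ^ k))
            (fun _ => (1 : ℝ)) t) :
    ProbabilityTheory.iIndepFun (m := fun _ : ℕ => (inferInstance : MeasurableSpace ℝ))
      (fun k => r (k + 1) ∘ F) μ ∧
    ∀ k : ℕ, 1 ≤ k → ∀ ε : ℝ, ε = -1 ∨ ε = 1 →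
      μ {x | r k (F x) = ε} = ENNReal.ofReal (1 / 2) := by
  have : NullSingletonClass μ := ⟨hdiff⟩
  obtain rfl : F = cdf μ := funext fun x => by rw [hF, cdf_eq_real, measureReal_def]
  obtain rfl : r = rademacher := funext₂ hr
  refine ⟨iIndepFun_rademacher_comp_cdf, fun k hk ε hε => ?_⟩
  obtain ⟨b, rfl⟩ : ∃ b : Fin 2, ε = (-1) ^ (b : ℕ) := by
    rcases hε with rfl | rfl
    exacts [⟨1, by norm_num⟩, ⟨0, by norm_num⟩]
  rw [measure_rademacher_comp_cdf hk b, one_div, ENNReal.ofReal_inv_of_pos two_pos,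
    ENNReal.ofReal_ofNat]
end

section
/- Let c : Fin n → ℝ be a random variable on Ω and suppose there exists a value v in the range of c whose level set {i : c i = v} consists of exactly one point. Then every random variable b : Fin n → ℝ that is independent of c under P is constant. -/
open MeasureTheory

/-- On the finite probability space `Fin n` with `P {i} = p i`,
if `c` takes some value `v` on exactly one point, then every random variable `b`
independent of `c` under `P` is constant. -/
theorem stmt_3 (n : ℕ) (hn : 1 ≤ n)
    (p : Fin n → ℝ) (hp : ∀ i, 0 < p i ∧ p i < 1) (hps : ∑ i, p i = 1)
    (P : Measure (Fin n)) [IsProbabilityMeasure P]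
    (hP : ∀ i : Fin n, P {i} = ENNReal.ofReal (p i))
    (c : Fin n → ℝ) (v : ℝ)
    (hv : ∃ i₀ : Fin n, {i : Fin n | c i = v} = {i₀})
    (b : Fin n → ℝ)
    (hindep : ∀ S T : Set ℝ,
      P ({ω | b ω ∈ S} ∩ {ω | c ω ∈ T}) = P {ω | b ω ∈ S} * P {ω | c ω ∈ T}) :
    ∀ i j : Fin n, b i = b j := by
  obtain ⟨i₀, hi₀⟩ := hv
  have hpos : ∀ i : Fin n, (0 : ENNReal) < P {i} := by
    intro i
    rw [hP i]
    exact ENNReal.ofReal_pos.mpr (hp i).1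
  -- key : every i has b i = b i₀
  have key : ∀ i : Fin n, b i = b i₀ := by
    intro i
    by_contra hne
    have h := hindep {b i} {v}
    have hc : {ω : Fin n | c ω ∈ ({v} : Set ℝ)} = {i₀} := by
      simpa using hi₀
    rw [hc] at h
    have hempty : {ω : Fin n | b ω ∈ ({b i} : Set ℝ)} ∩ {i₀} = ∅ := by
      ext ω
      simp only [Set.mem_inter_iff, Set.mem_setOf_eq, Set.mem_singleton_iff,
        Set.mem_empty_iff_false, iff_false]
      rintro ⟨h1, rfl⟩
      exact hne (by simpa using h1.symm)
    rw [hempty, measure_empty] at h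
    have hbpos : (0 : ENNReal) < P {ω : Fin n | b ω ∈ ({b i} : Set ℝ)} := by
      refine lt_of_lt_of_le (hpos i) (measure_mono ?_)
      intro ω hω
      simp_all
    have := ENNReal.mul_pos hbpos.ne' (hpos i₀).ne'
    rw [← h] at this
    exact lt_irrefl _ this
  intro i j
  rw [key i, key j]
end

section
/- Let c, b_1, …, b_N : Fin n → ℝ be random variables on Ω such that the family {c, b_1, …, b_N} is mutually independent under P and each b_i is non-constant. Let p denote the number of distinct values taken by c and, for each i, let n(b_i) denote the number of distinct values taken by b_i. Then p · ∏_{i=1}^N n(b_i) ≤ n. -/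
open MeasureTheory

/-! Since every point has positive mass, independence forces each level set
`{c = v₀} ∩ ⋂ i, {b i = v i}` with all factors nonempty to be nonempty too. Hence every
combination of attained values is attained jointly, so the product of the numbers of values
is at most the number of points. -/

theorem measure_ne_zero_of_nonempty {Ω : Type*} [MeasurableSpace Ω] {μ : Measure Ω}
    (hμ : ∀ ω, μ {ω} ≠ 0) {s : Set Ω} (hs : s.Nonempty) : μ s ≠ 0 := by
  obtain ⟨ω, hω⟩ := hs
  exact fun h => hμ ω (measure_mono_null (Set.singleton_subset_iff.2 hω) h)

theorem exists_eq_and_forall_eq_of_measure_eq_mul_prod {Ω α β ι : Type*}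
    [MeasurableSpace Ω] [Fintype ι] {μ : Measure Ω} (hμ : ∀ ω, μ {ω} ≠ 0)
    {c : Ω → α} {b : ι → Ω → β}
    (hindep : ∀ (v₀ : α) (v : ι → β),
      μ ({ω | c ω = v₀} ∩ ⋂ i, {ω | b i ω = v i}) =
        μ {ω | c ω = v₀} * ∏ i, μ {ω | b i ω = v i})
    (ω₀ : Ω) (ω : ι → Ω) : ∃ ω', c ω' = c ω₀ ∧ ∀ i, b i ω' = b i (ω i) := by
  have hne : μ ({ω' | c ω' = c ω₀} ∩ ⋂ i, {ω' | b i ω' = b i (ω i)}) ≠ 0 := by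
    rw [hindep]
    refine mul_ne_zero (measure_ne_zero_of_nonempty hμ ⟨ω₀, rfl⟩) ?_
    exact Finset.prod_ne_zero_iff.2 fun i _ =>
      measure_ne_zero_of_nonempty hμ ⟨ω i, rfl⟩
  obtain ⟨ω', hc, hb⟩ := nonempty_of_measure_ne_zero hne
  exact ⟨ω', hc, Set.mem_iInter.1 hb⟩

theorem card_image_mul_prod_card_image_le {Ω α β ι : Type*} [Fintype Ω] [Fintype ι]
    [DecidableEq α] [DecidableEq β] (c : Ω → α) (b : ι → Ω → β)
    (hjoint : ∀ (ω₀ : Ω) (ω : ι → Ω), ∃ ω', c ω' = c ω₀ ∧ ∀ i, b i ω' = b i (ω i)) :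
    (Finset.univ.image c).card * ∏ i, (Finset.univ.image (b i)).card ≤ Fintype.card Ω := by
  classical
  let f : Ω → α × (ι → β) := fun ω => (c ω, fun i => b i ω)
  have hsub : Finset.univ.image c ×ˢ Fintype.piFinset (fun i => Finset.univ.image (b i)) ⊆
      Finset.univ.image f := by
    rintro ⟨v₀, v⟩ hv
    obtain ⟨hv₀, hv⟩ := Finset.mem_product.1 hv
    obtain ⟨ω₀, -, rfl⟩ := Finset.mem_image.1 hv₀
    choose ω _ hω using fun i => Finset.mem_image.1 (Fintype.mem_piFinset.1 hv i)
    obtain ⟨ω', hc, hb⟩ := hjoint ω₀ ω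
    refine Finset.mem_image.2 ⟨ω', Finset.mem_univ _, ?_⟩
    exact Prod.ext hc (funext fun i => (hb i).trans (hω i))
  calc (Finset.univ.image c).card * ∏ i, (Finset.univ.image (b i)).card
      = (Finset.univ.image c ×ˢ Fintype.piFinset (fun i => Finset.univ.image (b i))).card := by
        rw [Finset.card_product, Fintype.card_piFinset]
    _ ≤ (Finset.univ.image f).card := Finset.card_le_card hsub
    _ ≤ Fintype.card Ω := Finset.card_image_le

theorem stmt_4_general (n N : ℕ)
    (p : Fin n → ℝ) (hp : ∀ i, 0 < p i ∧ p i < 1)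
    (P : Measure (Fin n))
    (hP : ∀ i : Fin n, P {i} = ENNReal.ofReal (p i))
    (c : Fin n → ℝ) (b : Fin N → Fin n → ℝ)
    (hindep : ∀ (v₀ : ℝ) (v : Fin N → ℝ),
      P ({ω | c ω = v₀} ∩ ⋂ i, {ω | b i ω = v i}) =
        P {ω | c ω = v₀} * ∏ i, P {ω | b i ω = v i}) :
    (Finset.univ.image c).card * ∏ i, (Finset.univ.image (b i)).card ≤ n := by
  have hP_pos : ∀ ω, P {ω} ≠ 0 := fun ω => by
    rw [hP, ne_eq, ENNReal.ofReal_eq_zero, not_le]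
    exact (hp ω).1
  simpa using card_image_mul_prod_card_image_le c b
    (exists_eq_and_forall_eq_of_measure_eq_mul_prod hP_pos hindep)

/-- On the finite probability space `Fin n` with `P {i} = p i`,
if `{c, b 1, …, b N}` is mutually independent (for every choice of one level
set of each variable, the probability of the intersection equals the product of
the probabilities) and each `b i` is non-constant, then the number of distinct
values of `c` times the product of the numbers of distinct values of the `b i`
is at most `n`. -/
theorem stmt_4 (n N : ℕ) (hn : 1 ≤ n)
    (p : Fin n → ℝ) (hp : ∀ i, 0 < p i ∧ p i < 1) (hps : ∑ i, p i = 1)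
    (P : Measure (Fin n)) [IsProbabilityMeasure P]
    (hP : ∀ i : Fin n, P {i} = ENNReal.ofReal (p i))
    (c : Fin n → ℝ) (b : Fin N → Fin n → ℝ)
    (hindep : ∀ (v₀ : ℝ) (v : Fin N → ℝ),
      P ({ω | c ω = v₀} ∩ ⋂ i, {ω | b i ω = v i}) =
        P {ω | c ω = v₀} * ∏ i, P {ω | b i ω = v i})
    (hnc : ∀ i : Fin N, ∃ ω ω' : Fin n, b i ω ≠ b i ω') :
    (Finset.univ.image c).card * ∏ i, (Finset.univ.image (b i)).card ≤ n :=
  stmt_4_general n N p hp P hP c b hindep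
end

section
/- If b_1, …, b_N : Fin n → ℝ are mutually independent random variables under P and each b_i is non-constant, then 2^N ≤ n. Consequently, the maximal size of a mutually independent family of random variables on Ω containing at most one constant variable is at most max{k ∈ ℕ : 2^{k−1} ≤ n}. -/
/-!
If the level sets of `b₁, …, b_N` are independent and every atom has positive mass, then for
every choice of attained values `v i ∈ range bᵢ` the intersection `⋂ i, {bᵢ = v i}` has
measure `∏ P {bᵢ = v i} > 0` and is therefore nonempty. So `ω ↦ (bᵢ ω)ᵢ` maps `Ω` onto the
product of the ranges, whence `#Ω ≥ ∏ #range bᵢ ≥ 2 ^ #{i | bᵢ non-constant}`. With at most one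
constant variable this gives `2 ^ (N - 1) ≤ n`.
-/

open MeasureTheory Finset

section LevelSets

variable {Ω ι β : Type*} [MeasurableSpace Ω] {P : Measure Ω} {b : ι → Ω → β}

lemma nonempty_iInter_levelSets_of_measure_eq_prod [Fintype ι] (hP : ∀ ω, P {ω} ≠ 0)
    {v : ι → β} (hind : P (⋂ i, {ω | b i ω = v i}) = ∏ i, P {ω | b i ω = v i})
    (hv : ∀ i, v i ∈ Set.range (b i)) : (⋂ i, {ω | b i ω = v i}).Nonempty := by
  refine nonempty_of_measure_ne_zero (μ := P) ?_
  rw [hind, prod_ne_zero_iff]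
  rintro i -
  obtain ⟨ω, hω⟩ := hv i
  exact fun h => hP ω (measure_mono_null (by simpa using hω) h)

variable [Fintype Ω] [Fintype ι] [DecidableEq ι] [DecidableEq β]

lemma piFinset_image_subset_image_of_indep_levelSets (hP : ∀ ω, P {ω} ≠ 0)
    (hind : ∀ v : ι → β, P (⋂ i, {ω | b i ω = v i}) = ∏ i, P {ω | b i ω = v i}) :
    Fintype.piFinset (fun i => univ.image (b i)) ⊆ univ.image fun ω i => b i ω := by
  intro v hv
  have hrange : ∀ i, v i ∈ Set.range (b i) := fun i => by
    simpa using Fintype.mem_piFinset.mp hv i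
  obtain ⟨ω, hω⟩ := nonempty_iInter_levelSets_of_measure_eq_prod hP (hind v) hrange
  exact mem_image.mpr ⟨ω, mem_univ ω, funext (Set.mem_iInter.mp hω)⟩

lemma two_pow_card_nonconstant_le_card [Nonempty Ω] (hP : ∀ ω, P {ω} ≠ 0)
    (hind : ∀ v : ι → β, P (⋂ i, {ω | b i ω = v i}) = ∏ i, P {ω | b i ω = v i}) :
    2 ^ #{i | ∃ ω ω', b i ω ≠ b i ω'} ≤ Fintype.card Ω := by
  calc 2 ^ #{i | ∃ ω ω', b i ω ≠ b i ω'}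
      ≤ ∏ i ∈ {i | ∃ ω ω', b i ω ≠ b i ω'}, #(univ.image (b i)) := by
        refine pow_card_le_prod _ _ _ fun i hi => one_lt_card.mpr ?_
        obtain ⟨ω, ω', hne⟩ := (mem_filter.mp hi).2
        exact ⟨b i ω, by simp, b i ω', by simp, hne⟩
    _ ≤ ∏ i, #(univ.image (b i)) :=
        prod_le_prod_of_subset_of_one_le' (subset_univ _) fun i _ _ =>
          (univ_nonempty.image (b i)).card_pos
    _ = #(Fintype.piFinset fun i => univ.image (b i)) := (Fintype.card_piFinset _).symm
    _ ≤ #(univ.image fun ω i => b i ω) :=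
        card_le_card (piFinset_image_subset_image_of_indep_levelSets hP hind)
    _ ≤ Fintype.card Ω := card_image_le

end LevelSets

lemma card_sub_one_le_card_filter_not {ι : Type*} [Fintype ι] (q : ι → Prop) [DecidablePred q]
    (hq : {i | q i}.Subsingleton) : Fintype.card ι - 1 ≤ #{i | ¬ q i} := by
  have hle : #(univ.filter q) ≤ 1 :=
    card_le_one.mpr fun i hi j hj => hq (by simpa using hi) (by simpa using hj)
  have := card_filter_add_card_filter_not (s := univ) q
  rw [card_univ] at this
  omega

lemma bddAbove_setOf_two_pow_sub_one_le (n : ℕ) : BddAbove {k : ℕ | 2 ^ (k - 1) ≤ n} :=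
  ⟨n + 1, fun k hk => by
    have := (k - 1).lt_two_pow_self
    simp only [Set.mem_ofPred_eq] at hk
    omega⟩

theorem stmt_5_general (n : ℕ) (hn : 1 ≤ n)
    (p : Fin n → ℝ) (hp : ∀ i, 0 < p i ∧ p i < 1)
    (P : Measure (Fin n))
    (hP : ∀ i : Fin n, P {i} = ENNReal.ofReal (p i)) :
    (∀ (N : ℕ) (b : Fin N → Fin n → ℝ),
      (∀ v : Fin N → ℝ,
        P (⋂ i, {ω | b i ω = v i}) = ∏ i, P {ω | b i ω = v i}) →
      (∀ i : Fin N, ∃ ω ω' : Fin n, b i ω ≠ b i ω') →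
      2 ^ N ≤ n) ∧
    (∀ (N : ℕ) (b : Fin N → Fin n → ℝ),
      (∀ v : Fin N → ℝ,
        P (⋂ i, {ω | b i ω = v i}) = ∏ i, P {ω | b i ω = v i}) →
      ({i : Fin N | ∀ ω ω' : Fin n, b i ω = b i ω'}.Subsingleton) →
      N ≤ sSup {k : ℕ | 2 ^ (k - 1) ≤ n}) := by
  have : Nonempty (Fin n) := Fin.pos_iff_nonempty.mp hn
  have hP₀ (i : Fin n) : P {i} ≠ 0 := by simpa [hP] using (hp i).1
  refine ⟨fun N b hind hnc => ?_, fun N b hind hconst => ?_⟩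
  · simpa [hnc] using two_pow_card_nonconstant_le_card hP₀ hind
  · have hbound := Fintype.card_fin n ▸ two_pow_card_nonconstant_le_card hP₀ hind
    refine le_csSup (bddAbove_setOf_two_pow_sub_one_le n)
      ((Nat.pow_le_pow_right two_pos ?_).trans hbound)
    convert card_sub_one_le_card_filter_not _ hconst using 3 <;> simp

/-- On the finite probability space `Fin n` with `P {i} = p i`:
(i) if `b 1, …, b N` are mutually independent (for every choice of one level set
of each variable, the probability of the intersection equals the product of the
probabilities) and each `b i` is non-constant, then `2 ^ N ≤ n`;
(ii) consequently any mutually independent family containing at most one constant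
variable has size at most `max {k : 2 ^ (k - 1) ≤ n}`. -/
theorem stmt_5 (n : ℕ) (hn : 1 ≤ n)
    (p : Fin n → ℝ) (hp : ∀ i, 0 < p i ∧ p i < 1) (hps : ∑ i, p i = 1)
    (P : Measure (Fin n)) [IsProbabilityMeasure P]
    (hP : ∀ i : Fin n, P {i} = ENNReal.ofReal (p i)) :
    (∀ (N : ℕ) (b : Fin N → Fin n → ℝ),
      (∀ v : Fin N → ℝ,
        P (⋂ i, {ω | b i ω = v i}) = ∏ i, P {ω | b i ω = v i}) →
      (∀ i : Fin N, ∃ ω ω' : Fin n, b i ω ≠ b i ω') →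
      2 ^ N ≤ n) ∧
    (∀ (N : ℕ) (b : Fin N → Fin n → ℝ),
      (∀ v : Fin N → ℝ,
        P (⋂ i, {ω | b i ω = v i}) = ∏ i, P {ω | b i ω = v i}) →
      ({i : Fin N | ∀ ω ω' : Fin n, b i ω = b i ω'}.Subsingleton) →
      N ≤ sSup {k : ℕ | 2 ^ (k - 1) ≤ n}) :=
  stmt_5_general n hn p hp P hP
end

section
/- Let (m_k)_{k≥0} be a real sequence with m_0 = 1, let (a_k) and (W_n) be as in the context, and set b_n = Σ_{k=0}^n (n choose k)·k·m_k·a_{n−k}. Then W_0 = 1, W_1 = x − m_1, and for every n ≥ 2 the polynomial identity W_n(x) = (x − m_1)·W_{n−1}(x) − (1/n)·Σ_{k=0}^{n−2} (n choose k)·b_{n−k}·W_k(x) holds in ℝ[x]. -/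
/-!
Write `f ⋆ g` for the binomial convolution `(f ⋆ g) n = ∑ₖ (n choose k) f k g (n - k)`, i.e.
multiplication of exponential generating functions, and `D f n = n f n` for the Euler operator
`t d/dt`, which is a derivation for `⋆`. The hypotheses say `m ⋆ a = δ₀`, `W = a ⋆ (xⁿ)ₙ` and
`b = D m ⋆ a`. Applying `D` to `m ⋆ a = δ₀` gives `m ⋆ D a = -b`, hence `D a = -(a ⋆ b)`; applying
it to `W` then gives `n W n = n x W (n - 1) - (W ⋆ b) n`. Since `b 0 = 0` and `b 1 = m 1`, the last
two terms of `(W ⋆ b) n` account for `n m 1 W (n - 1)`, and dividing by `n` gives the recurrence.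
-/

open Finset Polynomial

variable {R : Type*} [CommRing R]

def binConv (f g : ℕ → R) (n : ℕ) : R :=
  ∑ k ∈ range (n + 1), (n.choose k : R) * f k * g (n - k)

theorem binConv_comm (f g : ℕ → R) : binConv f g = binConv g f := by
  funext n
  rw [binConv, ← sum_range_reflect]
  refine sum_congr rfl fun k hk => ?_
  have hk : k ≤ n := Nat.lt_succ_iff.mp (mem_range.mp hk)
  rw [Nat.add_sub_cancel, Nat.sub_sub_self hk, Nat.choose_symm hk]
  ring

theorem single_zero_binConv (f : ℕ → R) : binConv (Pi.single 0 1) f = f := by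
  funext n
  rw [binConv, sum_eq_single 0 (fun k _ hk => by simp [hk]) (by simp)]
  simp

theorem binConv_neg (f g : ℕ → R) : binConv f (-g) = -binConv f g := by
  funext n
  simp [binConv, sum_neg_distrib]

theorem binConv_const_mul (f g : ℕ → R) (c : R) (n : ℕ) :
    binConv f (fun k => c * g k) n = c * binConv f g n := by
  rw [binConv, binConv, mul_sum]
  exact sum_congr rfl fun k _ => by ring

theorem map_binConv {S : Type*} [CommRing S] (φ : R →+* S) (f g : ℕ → R) (n : ℕ) :
    φ (binConv f g n) = binConv (φ ∘ f) (φ ∘ g) n := by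
  simp [binConv, map_sum]

theorem binConv_add_two_of_apply_zero {g : ℕ → R} (hg : g 0 = 0) (f : ℕ → R) (n : ℕ) :
    binConv f g (n + 2) =
      ∑ k ∈ range (n + 1), ((n + 2).choose k : R) * g (n + 2 - k) * f k +
        (n + 2) * g 1 * f (n + 1) := by
  rw [binConv, sum_range_succ, sum_range_succ, Nat.sub_self, hg, mul_zero, add_zero,
    show n + 2 - (n + 1) = 1 by omega, Nat.choose_succ_self_right]
  refine congrArg₂ (· + ·) (sum_congr rfl fun k _ => by ring) ?_
  push_cast
  ring

section ExponentialGeneratingFunction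

variable [Algebra ℚ R]

def egf (f : ℕ → R) : PowerSeries R :=
  PowerSeries.mk fun n => algebraMap ℚ R (n.factorial : ℚ)⁻¹ * f n

theorem egf_binConv (f g : ℕ → R) : egf (binConv f g) = egf f * egf g := by
  ext n
  rw [PowerSeries.coeff_mul, Nat.sum_antidiagonal_eq_sum_range_succ
    (fun i j => PowerSeries.coeff i (egf f) * PowerSeries.coeff j (egf g)), egf,
    PowerSeries.coeff_mk, binConv, mul_sum]
  refine sum_congr rfl fun k hk => ?_
  have hk : k ≤ n := Nat.lt_succ_iff.mp (mem_range.mp hk)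
  have hfact : (n.factorial : ℚ)⁻¹ * n.choose k =
      (k.factorial : ℚ)⁻¹ * ((n - k).factorial : ℚ)⁻¹ := by
    rw [← Nat.choose_mul_factorial_mul_factorial hk]
    have : (n.choose k : ℚ) ≠ 0 := by exact_mod_cast (Nat.choose_pos hk).ne'
    push_cast
    field_simp
  have hfactR := congrArg (algebraMap ℚ R) hfact
  rw [map_mul, map_mul, map_natCast] at hfactR
  simp only [egf, PowerSeries.coeff_mk]
  linear_combination (f k * g (n - k)) * hfactR

theorem egf_injective : Function.Injective (egf : (ℕ → R) → PowerSeries R) := by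
  intro f g h
  funext n
  have hn := congrArg (PowerSeries.coeff n) h
  simp only [egf, PowerSeries.coeff_mk] at hn
  exact ((IsUnit.mk0 _ (by positivity)).map (algebraMap ℚ R)).mul_left_cancel hn

theorem binConv_assoc (f g h : ℕ → R) :
    binConv (binConv f g) h = binConv f (binConv g h) :=
  egf_injective (by simp only [egf_binConv, mul_assoc])

end ExponentialGeneratingFunction

def eulerOp (f : ℕ → R) (n : ℕ) : R := n * f n

theorem eulerOp_binConv (f g : ℕ → R) (n : ℕ) :
    eulerOp (binConv f g) n = binConv (eulerOp f) g n + binConv f (eulerOp g) n := by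
  simp only [eulerOp, binConv, ← sum_add_distrib, mul_sum]
  refine sum_congr rfl fun k hk => ?_
  have hk : k ≤ n := Nat.lt_succ_iff.mp (mem_range.mp hk)
  rw [Nat.cast_sub hk]
  ring

theorem binConv_eulerOp_succ (f g : ℕ → R) (n : ℕ) :
    binConv f (eulerOp g) (n + 1) = (n + 1) * binConv f (fun k => g (k + 1)) n := by
  rw [binConv, sum_range_succ, eulerOp, Nat.sub_self, Nat.cast_zero, zero_mul, mul_zero, add_zero,
    binConv, mul_sum]
  refine sum_congr rfl fun k hk => ?_
  have hk : k ≤ n := Nat.lt_succ_iff.mp (mem_range.mp hk)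
  have hchoose : ((n + 1).choose k : R) * ((n - k : ℕ) + 1) = n.choose k * (n + 1) := by
    have h := Nat.choose_mul_succ_eq n k
    rw [Nat.sub_add_comm hk] at h
    exact_mod_cast congrArg (Nat.cast : ℕ → R) h.symm
  rw [eulerOp, Nat.sub_add_comm hk, Nat.cast_add_one]
  linear_combination f k * g (n - k + 1) * hchoose

theorem eulerOp_eq_neg_binConv [Algebra ℚ R] {m a : ℕ → R}
    (hma : binConv m a = Pi.single 0 1) :
    eulerOp a = -binConv a (binConv (eulerOp m) a) := by
  have hm_eulerOp : binConv m (eulerOp a) = -binConv (eulerOp m) a := by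
    funext n
    have hleibniz := eulerOp_binConv m a n
    have hsingle : (n : R) * (Pi.single 0 1 : ℕ → R) n = 0 := by rcases n with _ | n <;> simp
    rw [eulerOp, hma, hsingle] at hleibniz
    simp only [Pi.neg_apply]
    linear_combination -hleibniz
  calc eulerOp a = binConv (binConv a m) (eulerOp a) := by
        rw [binConv_comm a m, hma, single_zero_binConv]
    _ = _ := by rw [binConv_assoc, hm_eulerOp, binConv_neg]

theorem natCast_succ_mul_binConv_pow_succ [Algebra ℚ R] {m a : ℕ → R}
    (hma : binConv m a = Pi.single 0 1) (x : R) (n : ℕ) :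
    ((n : R) + 1) * binConv a (x ^ ·) (n + 1) =
      (n + 1) * x * binConv a (x ^ ·) n -
        binConv (binConv a (x ^ ·)) (binConv (eulerOp m) a) (n + 1) := by
  have hleibniz := eulerOp_binConv a (x ^ ·) (n + 1)
  rw [eulerOp_eq_neg_binConv hma, binConv_eulerOp_succ] at hleibniz
  simp only [pow_succ', binConv_const_mul] at hleibniz
  have hassoc : binConv (-binConv a (binConv (eulerOp m) a)) (x ^ ·) =
      -binConv (binConv a (x ^ ·)) (binConv (eulerOp m) a) := by
    rw [binConv_comm _ (x ^ ·), binConv_neg, ← binConv_assoc, binConv_comm (x ^ ·) a]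
  rw [eulerOp, hassoc, Pi.neg_apply, Nat.cast_add_one] at hleibniz
  linear_combination hleibniz

/-- With `(a k)` defined from `(m k)` by `a 0 = 1` and
`∑_{k≤n} (n choose k) m k a (n-k) = 0` for `n ≥ 1`, the Wick polynomials
`W n = ∑_{k≤n} (n choose k) a k x^(n-k)` satisfy the recurrence
`W 0 = 1`, `W 1 = x - m 1`, and for `n ≥ 2`,
`W n = (x - m 1)·W (n-1) - (1/n)·∑_{k=0}^{n-2} (n choose k) b (n-k) W k`,
where `b n = ∑_{k≤n} (n choose k) k m k a (n-k)`. -/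
theorem stmt_7 (m : ℕ → ℝ) (hm0 : m 0 = 1)
    (a : ℕ → ℝ) (ha0 : a 0 = 1)
    (ha : ∀ n : ℕ, 1 ≤ n →
      ∑ k ∈ Finset.range (n + 1), (n.choose k : ℝ) * m k * a (n - k) = 0)
    (W : ℕ → Polynomial ℝ)
    (hW : ∀ n, W n =
      ∑ k ∈ Finset.range (n + 1),
        Polynomial.C ((n.choose k : ℝ) * a k) * Polynomial.X ^ (n - k))
    (b : ℕ → ℝ)
    (hb : ∀ n, b n =
      ∑ k ∈ Finset.range (n + 1), (n.choose k : ℝ) * k * m k * a (n - k)) :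
    W 0 = 1 ∧
    W 1 = Polynomial.X - Polynomial.C (m 1) ∧
    ∀ n : ℕ, 2 ≤ n →
      W n = (Polynomial.X - Polynomial.C (m 1)) * W (n - 1) -
        Polynomial.C (1 / (n : ℝ)) *
          ∑ k ∈ Finset.range (n - 1),
            Polynomial.C ((n.choose k : ℝ) * b (n - k)) * W k := by
  have hma : binConv (C ∘ m) (C ∘ a) = Pi.single 0 1 := by
    funext n
    rw [← map_binConv]
    rcases n with _ | n
    · simp [binConv, hm0, ha0]
    · rw [binConv, ha (n + 1) (by omega)]
      simp
  have hW_eq : W = binConv (C ∘ a) (X ^ ·) := funext fun n => by simp [hW, binConv]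
  have hb_eq : C ∘ b = binConv (eulerOp (C ∘ m)) (C ∘ a) :=
    funext fun n => by simp [hb, binConv, eulerOp, mul_assoc]
  have ha1 : a 1 = -m 1 := by
    have h := ha 1 le_rfl
    simp [sum_range_succ, hm0, ha0] at h
    linarith
  refine ⟨by simp [hW, ha0], by simp [hW, sum_range_succ, ha0, ha1, sub_eq_add_neg], ?_⟩
  intro n hn
  obtain ⟨n, rfl⟩ : ∃ n', n = n' + 2 := ⟨n - 2, by omega⟩
  have hrec := natCast_succ_mul_binConv_pow_succ hma X (n + 1)
  have hb1 : b 1 = m 1 := by simp [hb, sum_range_succ, ha0]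
  rw [← hb_eq, ← hW_eq, binConv_add_two_of_apply_zero (by simp [hb])] at hrec
  simp only [Function.comp_apply, hb1] at hrec
  simp only [map_mul, map_natCast, show n + 2 - 1 = n + 1 from rfl]
  have hinv : C (1 / ((n + 2 : ℕ) : ℝ)) * ((n + 2 : ℕ) : ℝ[X]) = 1 := by
    rw [← map_natCast C, ← C_mul, one_div_mul_cancel (by positivity), C_1]
  push_cast at hrec hinv ⊢
  linear_combination C (1 / ((n : ℝ) + 2)) * hrec -
    (W (n + 2) - X * W (n + 1) + C (m 1) * W (n + 1)) * hinv
end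

section
/- Let (m_k)_{k≥0} be a real sequence with m_0 = 1 and let (a_k) and (W_n) be as in the context. Then W_0 = 1 and for every n ≥ 1 the polynomial identity n·W_n(x) = Σ_{k=1}^n (n choose k)·W_{n−k}(x)·(k·x·m_{k−1} − n·m_k) holds in ℝ[x]. -/
/-! With exponential generating functions `M(t) = Σ mₖ tᵏ/k!`, the sequence `a` is `1/M` and
`Σ Wₙ(x) tⁿ/n! = e^{xt}/M(t)`. On coefficients, associativity of the binomial convolution gives
`Σₖ (n choose k) mₖ Wₙ₋ₖ = xⁿ`, and the index shift `k mₖ₋₁ ↔ t M(t)` gives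
`Σₖ (n choose k) k mₖ₋₁ Wₙ₋ₖ = n xⁿ⁻¹`. The recurrence is `x` times the second identity minus
`n` times the first, whose `k = 0` term is `-n Wₙ`. -/

open Finset Polynomial

section BinomialConvolution

variable {R : Type*} [CommSemiring R]

def binomConv (f g : ℕ → R) (n : ℕ) : R :=
  ∑ k ∈ range (n + 1), (n.choose k : R) * f k * g (n - k)

theorem binomConv_assoc (f g h : ℕ → R) :
    binomConv (binomConv f g) h = binomConv f (binomConv g h) := by
  funext n
  let F : ℕ → ℕ → R := fun i j =>
    (n.choose i : R) * ((n - i).choose j : R) * f i * g j * h (n - i - j)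
  calc binomConv (binomConv f g) h n
      = ∑ s ∈ range (n + 1), ∑ i ∈ range (s + 1), F i (s - i) := by
        refine sum_congr rfl fun s _ => ?_
        rw [binomConv, mul_sum, sum_mul]
        refine sum_congr rfl fun i hi => ?_
        have his : i ≤ s := Nat.lt_succ_iff.mp (mem_range.mp hi)
        have hchoose : (n.choose s : R) * s.choose i = n.choose i * (n - i).choose (s - i) := by
          exact_mod_cast congrArg (Nat.cast : ℕ → R) (Nat.choose_mul (n := n) his)
        calc _ = ((n.choose s : R) * s.choose i) * (f i * g (s - i) * h (n - s)) := by ring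
          _ = F i (s - i) := by
            rw [hchoose]
            simp only [F, show n - i - (s - i) = n - s by omega]
            ring
    _ = ∑ i ∈ range (n + 1), ∑ j ∈ range (n + 1 - i), F i j := sum_range_diag_flip _ _
    _ = binomConv f (binomConv g h) n := by
        refine sum_congr rfl fun i hi => ?_
        have hin : i ≤ n := Nat.lt_succ_iff.mp (mem_range.mp hi)
        rw [binomConv, show n + 1 - i = n - i + 1 by omega, mul_sum]
        refine sum_congr rfl fun j _ => ?_
        ring

theorem single_zero_one_binomConv (g : ℕ → R) : binomConv (Pi.single 0 1) g = g := by
  funext n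
  rw [binomConv, sum_eq_single 0] <;> simp +contextual

theorem binomConv_natCast_mul_pred_succ (f g : ℕ → R) (n : ℕ) :
    binomConv (fun k => (k : R) * f (k - 1)) g (n + 1) = (n + 1) * binomConv f g n := by
  rw [binomConv, sum_range_succ', binomConv, mul_sum]
  simp only [Nat.cast_zero, zero_mul, mul_zero, add_zero, Nat.add_sub_cancel,
    Nat.add_sub_add_right]
  refine sum_congr rfl fun i _ => ?_
  have hchoose : ((n + 1).choose (i + 1) : R) * (i + 1) = (n + 1) * n.choose i := by
    exact_mod_cast congrArg (Nat.cast : ℕ → R) (Nat.add_one_mul_choose_eq n i).symm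
  calc _ = ((n + 1).choose (i + 1) : R) * (i + 1) * (f i * g (n - i)) := by push_cast; ring
    _ = _ := by rw [hchoose]; ring

end BinomialConvolution

theorem binomConv_pow_recurrence {R : Type*} [CommRing R] {m a : ℕ → R} (x : R)
    (hm0 : m 0 = 1) (hinv : binomConv m a = Pi.single 0 1) (n : ℕ) :
    ((n + 1 : ℕ) : R) * binomConv a (x ^ ·) (n + 1) =
      ∑ k ∈ Icc 1 (n + 1), ((n + 1).choose k : R) * binomConv a (x ^ ·) (n + 1 - k) *
        ((k : R) * m (k - 1) * x - (n + 1 : ℕ) * m k) := by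
  set W := binomConv a (x ^ ·)
  have hmW : binomConv m W = (x ^ ·) := by
    rw [← binomConv_assoc, hinv, single_zero_one_binomConv]
  have hshift := binomConv_natCast_mul_pred_succ m W n
  have hfull : ∑ k ∈ range (n + 1 + 1), ((n + 1).choose k : R) * W (n + 1 - k) *
      ((k : R) * m (k - 1) * x - (n + 1 : ℕ) * m k) = 0 := by
    calc _ = x * binomConv (fun k => (k : R) * m (k - 1)) W (n + 1)
          - (n + 1 : ℕ) * binomConv m W (n + 1) := by
          simp only [binomConv, mul_sum, ← sum_sub_distrib]
          exact sum_congr rfl fun k _ => by ring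
      _ = 0 := by rw [hshift, hmW]; push_cast; ring
  rw [sum_range_eq_add_Ico _ (Nat.succ_pos _), Nat.succ_eq_add_one,
    Ico_add_one_right_eq_Icc] at hfull
  simp only [Nat.choose_zero_right, Nat.cast_zero, Nat.cast_one, zero_mul, zero_sub, hm0,
    Nat.sub_zero] at hfull
  linear_combination -hfull

/-- With `(a k)` defined from `(m k)` by `a 0 = 1` and
`∑_{k≤n} (n choose k) m k a (n-k) = 0` for `n ≥ 1`, the Wick polynomials
`W n = ∑_{k≤n} (n choose k) a k x^(n-k)` satisfy `W 0 = 1` and, for `n ≥ 1`,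
`n·W n = ∑_{k=1}^{n} (n choose k)·W (n-k)·(k·x·m (k-1) - n·m k)`. -/
theorem stmt_8 (m : ℕ → ℝ) (hm0 : m 0 = 1)
    (a : ℕ → ℝ) (ha0 : a 0 = 1)
    (ha : ∀ n : ℕ, 1 ≤ n →
      ∑ k ∈ Finset.range (n + 1), (n.choose k : ℝ) * m k * a (n - k) = 0)
    (W : ℕ → Polynomial ℝ)
    (hW : ∀ n, W n =
      ∑ k ∈ Finset.range (n + 1),
        Polynomial.C ((n.choose k : ℝ) * a k) * Polynomial.X ^ (n - k)) :
    W 0 = 1 ∧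
    ∀ n : ℕ, 1 ≤ n →
      Polynomial.C (n : ℝ) * W n =
        ∑ k ∈ Finset.Icc 1 n,
          Polynomial.C (n.choose k : ℝ) * W (n - k) *
            (Polynomial.C ((k : ℝ) * m (k - 1)) * Polynomial.X -
              Polynomial.C ((n : ℝ) * m k)) := by
  have hWconv : W = binomConv (C ∘ a) (X ^ ·) := by
    funext n
    simp only [hW, binomConv, Function.comp, C_mul, map_natCast]
  have hinv : binomConv (C ∘ m) (C ∘ a) = Pi.single 0 1 := by
    funext n
    rcases Nat.eq_zero_or_pos n with rfl | hn
    · simp [binomConv, hm0, ha0]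
    · simpa [binomConv, Pi.single_apply, hn.ne', C_mul] using congrArg C (ha n hn)
  refine ⟨by simp [hWconv, binomConv, ha0], fun n hn => ?_⟩
  obtain ⟨n, rfl⟩ := Nat.exists_eq_add_of_le' hn
  have := binomConv_pow_recurrence X (by simp [hm0]) hinv n
  simpa [hWconv, C_mul, map_natCast, mul_comm] using this
end

section
/- Let (m_k)_{k≥0} be a real sequence with m_0 = 1 and let (a_k) and (W_n) be as in the context. Then for every n ≥ 0 the Wick polynomial W_n satisfies n·W_n(x) − Σ_{k=1}^n ((k·x·m_{k−1} − n·m_k)/k!)·W_n^{(k)}(x) = 0, as an identity in ℝ[x], where W_n^{(k)} denotes the k-th formal derivative. -/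
/-!
The Wick polynomials form an Appell sequence, `W n' = n • W (n - 1)`, so that
`W n^(k) / k! = (n choose k) • W (n - k)`. Convolving `W` binomially with `(m k)` gives again an
Appell sequence, whose constant terms `∑ (n choose k) m k a (n - k)` vanish for `n ≥ 1`; in
characteristic zero an Appell sequence is determined by its constant terms, so this convolution
is `X ^ n`. Using `k (n choose k) = n (n - 1 choose k - 1)` and `m 0 = 1`, the sum in the identity
becomes `n X · X ^ (n - 1) - n (X ^ n - W n) = n W n`.
-/

open Polynomial Finset

noncomputable section

namespace Polynomial

section CommSemiring

variable {R : Type*} [CommSemiring R]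

def binomialConv (c : ℕ → R) (P : ℕ → R[X]) (n : ℕ) : R[X] :=
  ∑ k ∈ range (n + 1), C ((n.choose k : R) * c k) * P (n - k)

-- Only the derivative recursion of an Appell sequence: no normalisation of degrees is imposed.
def IsAppell (P : ℕ → R[X]) : Prop :=
  ∀ n, derivative (P n) = C (n : R) * P (n - 1)

lemma isAppell_X_pow : IsAppell (X ^ · : ℕ → R[X]) := derivative_X_pow

variable {P : ℕ → R[X]}

lemma IsAppell.binomialConv (hP : IsAppell P) (c : ℕ → R) : IsAppell (binomialConv c P) := by
  rintro (_ | n)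
  · simp [Polynomial.binomialConv, hP 0]
  rw [Polynomial.binomialConv, Polynomial.binomialConv, derivative_sum, mul_sum, sum_range_succ]
  simp only [derivative_C_mul, hP _, Nat.sub_self, Nat.cast_zero, map_zero, zero_mul, mul_zero,
    add_zero, Nat.add_sub_cancel]
  refine sum_congr rfl fun k _ => ?_
  rw [show n + 1 - k - 1 = n - k by omega, ← mul_assoc, ← mul_assoc, ← C_mul, ← C_mul]
  congr 2
  rw [mul_right_comm, ← Nat.cast_mul, ← Nat.choose_mul_succ_eq]
  push_cast
  ring

lemma IsAppell.iterate_derivative (hP : IsAppell P) (n k : ℕ) :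
    derivative^[k] (P n) = C (n.descFactorial k : R) * P (n - k) := by
  induction k with
  | zero => simp
  | succ k ih =>
    rw [Function.iterate_succ_apply', ih, derivative_C_mul, hP, ← mul_assoc, ← C_mul,
      Nat.descFactorial_succ, Nat.cast_mul, mul_comm (n.descFactorial k : R), Nat.sub_sub]

lemma coeff_zero_binomialConv (c : ℕ → R) (P : ℕ → R[X]) (n : ℕ) :
    (binomialConv c P n).coeff 0 =
      ∑ k ∈ range (n + 1), (n.choose k : R) * c k * (P (n - k)).coeff 0 := by
  simp [Polynomial.binomialConv, finsetSum_coeff]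

lemma coeff_zero_binomialConv_X_pow (c : ℕ → R) (n : ℕ) :
    (binomialConv c (X ^ ·) n).coeff 0 = c n := by
  rw [coeff_zero_binomialConv, sum_range_succ, sum_eq_zero fun k hk => ?_]
  · simp
  · rw [coeff_X_pow, if_neg (by have := mem_range.mp hk; omega), mul_zero]

lemma binomialConv_eq_add_sum_Icc (c : ℕ → R) (P : ℕ → R[X]) (n : ℕ) :
    binomialConv c P n =
      C (c 0) * P n + ∑ k ∈ Icc 1 n, C ((n.choose k : R) * c k) * P (n - k) := by
  rw [Polynomial.binomialConv, range_eq_Ico, sum_eq_sum_Ico_succ_bot (by omega : 0 < n + 1),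
    zero_add, Ico_add_one_right_eq_Icc]
  simp

lemma sum_Icc_mul_choose_eq_mul_binomialConv_pred (c : ℕ → R) (P : ℕ → R[X]) (n : ℕ) :
    ∑ k ∈ Icc 1 n, C (k * (n.choose k : R) * c (k - 1)) * P (n - k) =
      C (n : R) * binomialConv c P (n - 1) := by
  rcases n with _ | n
  · simp
  rw [← Ico_add_one_right_eq_Icc, sum_Ico_eq_sum_range, Polynomial.binomialConv, mul_sum]
  refine sum_congr (by simp) fun k _ => ?_
  rw [← mul_assoc, ← C_mul, show n + 1 - (1 + k) = n - k by omega, Nat.add_sub_cancel,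
    add_comm 1 k, Nat.add_sub_cancel]
  congr 2
  rw [← mul_assoc, ← Nat.cast_mul, mul_comm (k + 1), ← Nat.add_one_mul_choose_eq, Nat.cast_mul]

end CommSemiring

section CommRing

variable {R : Type*} [CommRing R] [IsAddTorsionFree R]

lemma eq_of_derivative_eq_of_coeff_zero_eq {p q : R[X]} (hd : derivative p = derivative q)
    (h0 : p.coeff 0 = q.coeff 0) : p = q := by
  rw [← sub_eq_zero, eq_C_of_derivative_eq_zero (p := p - q) (by rw [derivative_sub, hd, sub_self]),
    coeff_sub, h0, sub_self, map_zero]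

lemma IsAppell.ext {P Q : ℕ → R[X]} (hP : IsAppell P) (hQ : IsAppell Q)
    (h : ∀ n, (P n).coeff 0 = (Q n).coeff 0) : P = Q := by
  funext n
  refine eq_of_derivative_eq_of_coeff_zero_eq ?_ (h n)
  induction n with
  | zero => simp [hP 0, hQ 0]
  | succ n ih => rw [hP, hQ, Nat.add_sub_cancel, eq_of_derivative_eq_of_coeff_zero_eq ih (h n)]

lemma binomialConv_binomialConv_X_pow {m a : ℕ → R}
    (hma : ∀ n, ∑ k ∈ range (n + 1), (n.choose k : R) * m k * a (n - k) = if n = 0 then 1 else 0) :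
    binomialConv m (binomialConv a (X ^ ·)) = (X ^ ·) :=
  ((isAppell_X_pow.binomialConv a).binomialConv m).ext isAppell_X_pow fun n => by
    rw [coeff_zero_binomialConv]
    simp only [coeff_zero_binomialConv_X_pow]
    rw [hma, coeff_X_pow]
    exact if_congr eq_comm rfl rfl

end CommRing

section Field

variable {K : Type*} [Field K] [CharZero K]

lemma IsAppell.C_inv_factorial_mul_iterate_derivative {P : ℕ → K[X]} (hP : IsAppell P) (n k : ℕ) :
    C (1 / k.factorial : K) * derivative^[k] (P n) = C (n.choose k : K) * P (n - k) := by
  rw [hP.iterate_derivative, ← mul_assoc, ← C_mul, Nat.descFactorial_eq_factorial_mul_choose,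
    Nat.cast_mul, one_div, inv_mul_cancel_left₀ (Nat.cast_ne_zero.mpr k.factorial_ne_zero)]

end Field

end Polynomial

end

/-- With `(a k)` defined from `(m k)` by `a 0 = 1` and
`∑_{k≤n} (n choose k) m k a (n-k) = 0` for `n ≥ 1`, the Wick polynomials
`W n = ∑_{k≤n} (n choose k) a k x^(n-k)` satisfy
`n·W n - ∑_{k=1}^n ((k·x·m (k-1) - n·m k)/k!)·W n^(k) = 0`,
where `W n^(k)` is the `k`-th formal derivative. -/
theorem stmt_10 (m : ℕ → ℝ) (hm0 : m 0 = 1)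
    (a : ℕ → ℝ) (ha0 : a 0 = 1)
    (ha : ∀ n : ℕ, 1 ≤ n →
      ∑ k ∈ Finset.range (n + 1), (n.choose k : ℝ) * m k * a (n - k) = 0)
    (W : ℕ → Polynomial ℝ)
    (hW : ∀ n, W n =
      ∑ k ∈ Finset.range (n + 1),
        Polynomial.C ((n.choose k : ℝ) * a k) * Polynomial.X ^ (n - k)) :
    ∀ n : ℕ,
      Polynomial.C (n : ℝ) * W n -
        ∑ k ∈ Finset.Icc 1 n,
          (Polynomial.C ((k : ℝ) * m (k - 1)) * Polynomial.X -
              Polynomial.C ((n : ℝ) * m k)) *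
            Polynomial.C (1 / (k.factorial : ℝ)) *
            (Polynomial.derivative^[k] (W n)) = 0 := by
  obtain rfl : W = binomialConv a (X ^ ·) := funext hW
  have hA : IsAppell (binomialConv a (X ^ ·)) := isAppell_X_pow.binomialConv a
  have hmA : binomialConv m (binomialConv a (X ^ ·)) = (X ^ ·) :=
    binomialConv_binomialConv_X_pow fun
      | 0 => by simp [hm0, ha0]
      | n + 1 => ha (n + 1) n.succ_pos
  intro n
  have hterm : ∀ k ∈ Icc 1 n,
      (C ((k : ℝ) * m (k - 1)) * X - C ((n : ℝ) * m k)) * C (1 / (k.factorial : ℝ)) *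
          derivative^[k] (binomialConv a (X ^ ·) n) =
        X * (C (k * (n.choose k : ℝ) * m (k - 1)) * binomialConv a (X ^ ·) (n - k)) -
          C (n : ℝ) * (C ((n.choose k : ℝ) * m k) * binomialConv a (X ^ ·) (n - k)) := by
    intro k _
    rw [mul_assoc, hA.C_inv_factorial_mul_iterate_derivative]
    simp only [map_mul]
    ring
  rw [sum_congr rfl hterm, sum_sub_distrib, ← mul_sum, ← mul_sum, sum_Icc_mul_choose_eq_mul_binomialConv_pred,
    ← sub_eq_iff_eq_add'.mpr (binomialConv_eq_add_sum_Icc m _ n), hmA, hm0]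
  rcases n with _ | n
  · simp
  · simp only [Nat.add_sub_cancel, map_one, one_mul]
    ring
end

section
/- Let a ∈ ℝ and b ∈ ℝ with b ≠ 0. Then for every n ≥ 1 the polynomial identity Γ_n^{a,b}(x) = (n!/b^n) · Σ_{k=0}^{n−1} (−1)^{n−k} · (n−1 choose k) · L_{n−k}^{a−1}(b·x) holds in ℝ[x] (and Γ_0^{a,b}(x) = L_0^{a−1}(b·x) = 1). -/
/-!
Both sides are compared coefficientwise. By upper negation, the coefficient
`binom(m + α, m - i)` of `x^i` in `L_m^α` equals `(-1)^(m-i) binom(-α-i-1, m-i)`, so the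
coefficient of `x^i` in `∑_k (-1)^(n-k) binom(n-1, k) L_{n-k}^α` is a Chu–Vandermonde
convolution of `binom(n-1, ·)` with `binom(-α-i-1, ·)`. It sums to `binom(n-2-α-i, n-i)`,
which is `(-1)^(n-i) binom(α+1, n-i)` by upper negation again; for `α = a - 1` this is,
up to the factor `n!/b^n` and the substitution `x ↦ b x`, the coefficient of `x^i` in `Γ_n^{a,b}`.
-/

open Polynomial Finset Nat

section
variable {K : Type*} [Field K] [CharZero K]

theorem Ring.choose_eq_prod_range_sub_div_factorial (r : K) (k : ℕ) :
    Ring.choose r k = (∏ i ∈ range k, (r - i)) / k ! := by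
  rw [Ring.choose_eq_smul, ← aeval_eq_smeval, aeval_def, eval₂_eq_eval_map, descPochhammer_map,
    descPochhammer_eval_eq_prod_range, smul_eq_mul, inv_mul_eq_div]

theorem Ring.choose_natCast_sub (c : K) (m : ℕ) :
    Ring.choose ((m : K) - c) m = (-1) ^ m * Ring.choose (c - 1) m := by
  rw [show (m : K) - c = -(c - m) by ring, Ring.choose_neg, sub_add_cancel, Units.smul_def,
    Int.coe_negOnePow_natCast, zsmul_eq_mul, Int.cast_pow, Int.cast_neg, Int.cast_one]

theorem sum_range_ite_choose_mul_ringChoose (x : K) (n m : ℕ) :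
    ∑ k ∈ range (n + 1), (if k ≤ m then (n.choose k : K) * Ring.choose x (m - k) else 0) =
      Ring.choose ((n : K) + x) m := by
  rw [Ring.add_choose_eq m (Commute.all _ _), Nat.sum_antidiagonal_eq_sum_range_succ_mk,
    ← sum_filter]
  simp only [Ring.choose_natCast]
  refine sum_subset (fun k ↦ by simp only [mem_filter, mem_range]; omega) fun k hk hk' ↦ ?_
  simp only [mem_filter, mem_range] at hk hk'
  rw [Nat.choose_eq_zero_of_lt (by omega), cast_zero, zero_mul]

noncomputable def laguerre (α : K) (n : ℕ) : K[X] :=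
  ∑ j ∈ range (n + 1), C ((-1) ^ j * Ring.choose (n + α) (n - j) / j !) * X ^ j

noncomputable def gammaWick (a b : K) (n : ℕ) : K[X] :=
  ∑ k ∈ range (n + 1), C (n ! * Ring.choose a (n - k) * (-1 / b) ^ (n - k) / k !) * X ^ k

theorem coeff_gammaWick (a b : K) (n i : ℕ) :
    (gammaWick a b n).coeff i =
      if i ≤ n then n ! * Ring.choose a (n - i) * (-1 / b) ^ (n - i) / i ! else 0 := by
  simp [gammaWick]

theorem coeff_laguerre (α : K) (n i : ℕ) :
    (laguerre α n).coeff i =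
      if i ≤ n then (-1) ^ n * Ring.choose (-(α + i) - 1) (n - i) / i ! else 0 := by
  simp only [laguerre, finsetSum_coeff, coeff_C_mul_X_pow, sum_ite_eq, mem_range, Nat.lt_succ_iff]
  split_ifs with hi
  · have : (n : K) + α = ((n - i : ℕ) : K) - -(α + i) := by push_cast [hi]; ring
    rw [this, Ring.choose_natCast_sub, ← mul_assoc, ← pow_add, Nat.add_sub_of_le hi]
  · rfl

theorem sum_neg_one_pow_mul_choose_mul_laguerre (α : K) (n : ℕ) :
    ∑ k ∈ range (n + 1), C ((-1) ^ (n + 1 - k) * (n.choose k : K)) * laguerre α (n + 1 - k) =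
      ∑ i ∈ range (n + 2),
        C ((-1) ^ (n + 1 - i) * Ring.choose (α + 1) (n + 1 - i) / i !) * X ^ i := by
  ext i
  simp only [finsetSum_coeff, coeff_C_mul_X_pow, sum_ite_eq, mem_range, Nat.lt_succ_iff]
  simp only [coeff_C_mul, coeff_laguerre]
  split_ifs with hi
  · have hterm : ∀ k ∈ range (n + 1),
        (-1) ^ (n + 1 - k) * (n.choose k : K) *
          (if i ≤ n + 1 - k then
            (-1) ^ (n + 1 - k) * Ring.choose (-(α + i) - 1) (n + 1 - k - i) / i ! else 0) =
        (if k ≤ n + 1 - i then (n.choose k : K) * Ring.choose (-(α + i) - 1) (n + 1 - i - k)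
          else 0) / i ! := by
      intro k hk
      rw [mem_range] at hk
      by_cases hk' : k ≤ n + 1 - i
      · have hsq : ((-1 : K) ^ (n + 1 - k)) * (-1) ^ (n + 1 - k) = 1 := by
          rw [← mul_pow, neg_one_mul, neg_neg, one_pow]
        rw [if_pos (by omega), if_pos hk', show n + 1 - k - i = n + 1 - i - k by omega]
        linear_combination
          (n.choose k : K) * Ring.choose (-(α + i) - 1) (n + 1 - i - k) / i ! * hsq
      · rw [if_neg (by omega), if_neg hk', mul_zero, zero_div]
    have hcast : (n : K) + (-(α + i) - 1) = ((n + 1 - i : ℕ) : K) - (α + 2) := by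
      push_cast [hi]; ring
    rw [sum_congr rfl hterm, ← sum_div, sum_range_ite_choose_mul_ringChoose, hcast,
      Ring.choose_natCast_sub]
    ring_nf
  · refine sum_eq_zero fun k hk ↦ ?_
    rw [if_neg (by omega), mul_zero]

theorem gammaWick_eq_comp (a : K) {b : K} (hb : b ≠ 0) (n : ℕ) :
    gammaWick a b n = C (n ! / b ^ n) *
      (∑ i ∈ range (n + 1), C ((-1) ^ (n - i) * Ring.choose a (n - i) / i !) * X ^ i).comp
        (C b * X) := by
  ext i
  rw [coeff_gammaWick, coeff_C_mul, comp_C_mul_X_coeff]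
  simp only [finsetSum_coeff, coeff_C_mul_X_pow, sum_ite_eq, mem_range, Nat.lt_succ_iff]
  split_ifs with hi
  · obtain ⟨m, rfl⟩ := Nat.exists_eq_add_of_le hi
    rw [Nat.add_sub_cancel_left, div_pow, pow_add]
    field_simp
  · simp

end

/-- Let `gchoose α k = α(α-1)⋯(α-k+1)/k!` be the generalized
binomial coefficient, `L α n = ∑_{m≤n} (-1)^m (gchoose (n+α) (n-m)) x^m/m!`
the generalized Laguerre polynomial, and
`Γ n = n! ∑_{k≤n} (gchoose a (n-k)) (x^k/k!) (-1/b)^(n-k)` the Wick polynomial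
of the `Gamma(a,b)` law. Then `Γ 0 = L (a-1) 0 ∘ (b·x) = 1` and, for `n ≥ 1`,
`Γ n = (n!/b^n) ∑_{k=0}^{n-1} (-1)^(n-k) (n-1 choose k) (L (a-1) (n-k)) (b·x)`. -/
theorem stmt_11 (a b : ℝ) (hb : b ≠ 0)
    (gchoose : ℝ → ℕ → ℝ)
    (hgchoose : ∀ (α : ℝ) (k : ℕ),
      gchoose α k = (∏ i ∈ Finset.range k, (α - i)) / (k.factorial : ℝ))
    (L : ℝ → ℕ → Polynomial ℝ)
    (hL : ∀ (α : ℝ) (n : ℕ), L α n =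
      ∑ j ∈ Finset.range (n + 1),
        Polynomial.C ((-1 : ℝ) ^ j * gchoose ((n : ℝ) + α) (n - j) /
          (j.factorial : ℝ)) * Polynomial.X ^ j)
    (G : ℕ → Polynomial ℝ)
    (hG : ∀ n : ℕ, G n =
      ∑ k ∈ Finset.range (n + 1),
        Polynomial.C ((n.factorial : ℝ) * gchoose a (n - k) *
          (-1 / b) ^ (n - k) / (k.factorial : ℝ)) * Polynomial.X ^ k) :
    (G 0 = 1 ∧ (L (a - 1) 0).comp (Polynomial.C b * Polynomial.X) = 1) ∧
    ∀ n : ℕ, 1 ≤ n →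
      G n = Polynomial.C ((n.factorial : ℝ) / b ^ n) *
        ∑ k ∈ Finset.range n,
          Polynomial.C ((-1 : ℝ) ^ (n - k) * ((n - 1).choose k : ℝ)) *
            (L (a - 1) (n - k)).comp (Polynomial.C b * Polynomial.X) := by
  obtain rfl : gchoose = Ring.choose :=
    funext₂ fun α k ↦ by rw [hgchoose, Ring.choose_eq_prod_range_sub_div_factorial]
  obtain rfl : L = laguerre := funext₂ fun α n ↦ hL α n
  obtain rfl : G = gammaWick a b := funext hG
  refine ⟨⟨by simp [gammaWick], by simp [laguerre]⟩, fun n hn ↦ ?_⟩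
  obtain ⟨n, rfl⟩ := Nat.exists_eq_add_of_le' hn
  have hsum := sum_neg_one_pow_mul_choose_mul_laguerre (a - 1) n
  rw [sub_add_cancel] at hsum
  rw [gammaWick_eq_comp a hb, Nat.add_sub_cancel, ← hsum, Polynomial.sum_comp]
  simp only [mul_comp, C_comp]
end

section
/- Let (Ω, F, P) be a probability space and (X_n)_{n≥1} a mutually independent sequence of real random variables such that each X_n takes values in a two-element set {a_1, a_2} ⊂ ℝ, E[X_n] = 0 and E[X_n²] = 1, and assume F = σ(X_n : n ≥ 1). Then the linear span of the family of finite products {∏_{i∈S} X_i : S a finite subset of ℕ≥1} (with the empty product equal to the constant 1) is dense in L²(Ω, F, P). -/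
/-!
If `g ∈ L²` is orthogonal to every product `∏_{i ∈ S} X i`, then, expanding, it is also
orthogonal to every `∏_{i ∈ S} (a₂ - X i)`. Since `X i` only takes the
values `a₁, a₂`, such a product is `(a₂ - a₁)^|S|` times the indicator of
`{X i = a₁ for all i ∈ S}`. These sets form a π-system generating the σ-algebra, so all set
integrals of `g` vanish by Dynkin's theorem, and `g = 0`.
-/

open MeasureTheory

section LevelSets

variable {Ω ι α : Type*}

def levelSetInters (X : ι → Ω → α) (a : α) : Set (Set Ω) :=
  {t | ∃ S : Finset ι, t = ⋂ i ∈ S, X i ⁻¹' {a}}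

lemma isPiSystem_levelSetInters (X : ι → Ω → α) (a : α) :
    IsPiSystem (levelSetInters X a) := by
  classical
  rintro _ ⟨S₁, rfl⟩ _ ⟨S₂, rfl⟩ -
  exact ⟨S₁ ∪ S₂, (Finset.set_biInter_inter S₁ S₂ _).symm⟩

lemma measurable_of_forall_eq_or_eq [MeasurableSpace α] {m : MeasurableSpace Ω}
    {f : Ω → α} {a₁ a₂ : α} (ha : a₁ ≠ a₂) (hf : ∀ ω, f ω = a₁ ∨ f ω = a₂)
    (h₁ : MeasurableSet[m] (f ⁻¹' {a₁})) : Measurable[m] f := by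
  intro B _
  have hB : f ⁻¹' B = (f ⁻¹' {a₁} ∩ {_ω | a₁ ∈ B}) ∪ ((f ⁻¹' {a₁})ᶜ ∩ {_ω | a₂ ∈ B}) := by
    ext ω
    rcases hf ω with h | h <;> simp [h, ha.symm]
  rw [hB]
  exact (h₁.inter (.const _)).union (h₁.compl.inter (.const _))

lemma generateFrom_levelSetInters [MeasurableSpace α] [MeasurableSingletonClass α]
    {X : ι → Ω → α} {a₁ a₂ : α} (ha : a₁ ≠ a₂) (hval : ∀ i ω, X i ω = a₁ ∨ X i ω = a₂) :
    MeasurableSpace.generateFrom (levelSetInters X a₁) =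
      ⨆ i, MeasurableSpace.comap (X i) inferInstance := by
  refine le_antisymm (MeasurableSpace.generateFrom_le ?_) (iSup_le fun i => ?_)
  · rintro _ ⟨S, rfl⟩
    refine Finset.measurableSet_biInter S fun i _ => ?_
    exact (measurable_iff_comap_le.2
      (le_iSup (fun j => MeasurableSpace.comap (X j) inferInstance) i)) (measurableSet_singleton a₁)
  · refine (measurable_of_forall_eq_or_eq ha (hval i) ?_).comap_le
    exact MeasurableSpace.measurableSet_generateFrom ⟨{i}, by simp⟩

end LevelSets

section Products

variable {Ω ι : Type*} {X : ι → Ω → ℝ} {a₁ a₂ : ℝ}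

lemma prod_sub_eq_indicator (hval : ∀ i ω, X i ω = a₁ ∨ X i ω = a₂) (S : Finset ι) (ω : Ω) :
    ∏ i ∈ S, (a₂ - X i ω) =
      (⋂ i ∈ S, X i ⁻¹' {a₁}).indicator (fun _ => (a₂ - a₁) ^ S.card) ω := by
  by_cases hω : ω ∈ ⋂ i ∈ S, X i ⁻¹' {a₁}
  · simp only [Set.mem_iInter, Set.mem_preimage, Set.mem_singleton_iff] at hω
    rw [Set.indicator_of_mem (by simpa using hω), Finset.prod_congr rfl fun i hi => by
      rw [hω i hi], Finset.prod_const]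
  · obtain ⟨i, hi, hne⟩ : ∃ i ∈ S, X i ω ≠ a₁ := by simpa using hω
    rw [Set.indicator_of_notMem hω, Finset.prod_eq_zero hi (by rw [(hval i ω).resolve_left hne,
      sub_self])]

variable [MeasurableSpace Ω] {μ : Measure Ω}

lemma memLp_prod_of_forall_eq_or_eq [IsFiniteMeasure μ] (hX : ∀ i, Measurable (X i))
    (hval : ∀ i ω, X i ω = a₁ ∨ X i ω = a₂) (S : Finset ι) (p : ENNReal) :
    MemLp (fun ω => ∏ i ∈ S, X i ω) p μ := by
  refine MemLp.of_bound (Finset.measurable_prod S fun i _ => hX i).aestronglyMeasurable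
    (max |a₁| |a₂| ^ S.card) (Filter.Eventually.of_forall fun ω => ?_)
  rw [Real.norm_eq_abs, Finset.abs_prod, ← Finset.prod_const]
  refine Finset.prod_le_prod (fun i _ => abs_nonneg _) fun i _ => ?_
  rcases hval i ω with h | h <;> simp [h]

lemma integral_prod_sub_mul_eq_zero {g : Ω → ℝ}
    (hint : ∀ S : Finset ι, Integrable (fun ω => (∏ i ∈ S, X i ω) * g ω) μ)
    (horth : ∀ S : Finset ι, ∫ ω, (∏ i ∈ S, X i ω) * g ω ∂μ = 0) (c : ℝ) (S : Finset ι) :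
    ∫ ω, (∏ i ∈ S, (c - X i ω)) * g ω ∂μ = 0 := by
  classical
  have hexp : ∀ ω, (∏ i ∈ S, (c - X i ω)) * g ω =
      ∑ t ∈ S.powerset, ((-1) ^ t.card * c ^ (S \ t).card) * ((∏ i ∈ t, X i ω) * g ω) := by
    intro ω
    have hlin : ∀ i, c - X i ω = (-1) * X i ω + c := fun i => by ring
    simp_rw [hlin, Finset.prod_add, Finset.prod_mul_distrib,
      Finset.prod_const, Finset.sum_mul]
    exact Finset.sum_congr rfl fun t _ => by ring
  simp_rw [hexp]
  rw [integral_finsetSum _ fun t _ => (hint t).const_mul _]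
  exact Finset.sum_eq_zero fun t _ => by rw [integral_const_mul, horth t, mul_zero]

lemma integral_prod_sub_mul (hX : ∀ i, Measurable (X i))
    (hval : ∀ i ω, X i ω = a₁ ∨ X i ω = a₂) (g : Ω → ℝ) (S : Finset ι) :
    ∫ ω, (∏ i ∈ S, (a₂ - X i ω)) * g ω ∂μ =
      (a₂ - a₁) ^ S.card * ∫ ω in ⋂ i ∈ S, X i ⁻¹' {a₁}, g ω ∂μ := by
  have hmeas : MeasurableSet (⋂ i ∈ S, X i ⁻¹' {a₁}) :=
    Finset.measurableSet_biInter S fun i _ => hX i (measurableSet_singleton a₁)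
  have hpt : ∀ ω, (∏ i ∈ S, (a₂ - X i ω)) * g ω =
      (a₂ - a₁) ^ S.card * (⋂ i ∈ S, X i ⁻¹' {a₁}).indicator g ω := fun ω => by
    rw [prod_sub_eq_indicator hval, ← Set.indicator_mul_left, ← Set.indicator_const_mul]
  simp_rw [hpt, integral_const_mul, integral_indicator hmeas]

end Products

lemma ae_eq_zero_of_setIntegral_eq_zero_of_isPiSystem {Ω : Type*} [m : MeasurableSpace Ω]
    {μ : Measure Ω} {f : Ω → ℝ} {C : Set (Set Ω)} (hgen : m = MeasurableSpace.generateFrom C)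
    (hpi : IsPiSystem C) (hf : Integrable f μ) (huniv : ∫ ω, f ω ∂μ = 0)
    (hC : ∀ t ∈ C, ∫ ω in t, f ω ∂μ = 0) : f =ᵐ[μ] 0 := by
  suffices h : ∀ s, MeasurableSet s → ∫ ω in s, f ω ∂μ = 0 from
    hf.ae_eq_zero_of_forall_setIntegral_eq_zero fun s hs _ => h s hs
  intro s hs
  induction s, hs using MeasurableSpace.induction_on_inter hgen hpi with
  | empty => simp
  | basic t ht => exact hC t ht
  | compl t ht h =>
    have := integral_add_compl ht hf
    rw [h, huniv] at this
    linarith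
  | iUnion t hd hm h =>
    rw [integral_iUnion hm hd hf.integrableOn]
    simp [h]

theorem stmt_12_general {Ω : Type*} [MeasurableSpace Ω] (P : Measure Ω)
    [IsProbabilityMeasure P] (X : ℕ → Ω → ℝ) (hXm : ∀ n, Measurable (X n))
    (a₁ a₂ : ℝ) (ha : a₁ ≠ a₂)
    (hval : ∀ n ω, X n ω = a₁ ∨ X n ω = a₂)
    (hgen : (inferInstance : MeasurableSpace Ω) =
      ⨆ n : ℕ, MeasurableSpace.comap (X n) (inferInstance : MeasurableSpace ℝ)) :
    Dense (↑(Submodule.span ℝ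
      {f : Lp ℝ 2 P | ∃ S : Finset ℕ, ∀ᵐ ω ∂P, f ω = ∏ i ∈ S, X i ω}) :
        Set (Lp ℝ 2 P)) := by
  rw [Submodule.dense_iff_topologicalClosure_eq_top, Submodule.topologicalClosure_eq_top_iff,
    Submodule.eq_bot_iff]
  intro g hg
  have hprod (S : Finset ℕ) : MemLp (fun ω => ∏ i ∈ S, X i ω) 2 P :=
    memLp_prod_of_forall_eq_or_eq hXm hval S 2
  have horth (S : Finset ℕ) : ∫ ω, (∏ i ∈ S, X i ω) * g ω ∂P = 0 := by
    rw [← hg _ (Submodule.subset_span ⟨S, (hprod S).coeFn_toLp⟩), L2.inner_def]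
    refine integral_congr_ae ?_
    filter_upwards [(hprod S).coeFn_toLp] with ω hω
    simp [hω, mul_comm]
  have hcyl : ∀ t ∈ levelSetInters X a₁, ∫ ω in t, g ω ∂P = 0 := by
    rintro _ ⟨S, rfl⟩
    have h := integral_prod_sub_mul_eq_zero (fun S => (hprod S).integrable_mul (Lp.memLp g))
      horth a₂ S
    rw [integral_prod_sub_mul hXm hval] at h
    exact (mul_eq_zero.1 h).resolve_left (pow_ne_zero _ (sub_ne_zero.2 ha.symm))
  refine Lp.eq_zero_iff_ae_eq_zero.2 (ae_eq_zero_of_setIntegral_eq_zero_of_isPiSystem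
    (hgen.trans (generateFrom_levelSetInters ha hval).symm) (isPiSystem_levelSetInters X a₁)
    ((Lp.memLp g).integrable one_le_two) ?_ hcyl)
  simpa using hcyl Set.univ ⟨∅, by simp⟩

/-- If `(X n)` is a mutually independent sequence of centered,
reduced random variables each taking values in a two-element set
`{a₁, a₂} ⊂ ℝ`, generating the σ-algebra of `Ω`, then the linear span of the
finite products `∏_{i ∈ S} X i` (empty product = `1`) is dense in `L²(Ω, F, P)`. -/
theorem stmt_12 {Ω : Type*} [MeasurableSpace Ω] (P : Measure Ω)
    [IsProbabilityMeasure P] (X : ℕ → Ω → ℝ) (hXm : ∀ n, Measurable (X n))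
    (hindep : ProbabilityTheory.iIndepFun X P)
    (a₁ a₂ : ℝ) (ha : a₁ ≠ a₂)
    (hval : ∀ n ω, X n ω = a₁ ∨ X n ω = a₂)
    (hcent : ∀ n, ∫ ω, X n ω ∂P = 0)
    (hred : ∀ n, ∫ ω, X n ω ^ 2 ∂P = 1)
    (hgen : (inferInstance : MeasurableSpace Ω) =
      ⨆ n : ℕ, MeasurableSpace.comap (X n) (inferInstance : MeasurableSpace ℝ)) :
    Dense (↑(Submodule.span ℝ
      {f : Lp ℝ 2 P | ∃ S : Finset ℕ, ∀ᵐ ω ∂P, f ω = ∏ i ∈ S, X i ω}) :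
        Set (Lp ℝ 2 P)) :=
  stmt_12_general P X hXm a₁ a₂ ha hval hgen
end

section
/- Let (Ω, F, P) be a probability space and (X_n)_{n≥1} a mutually independent sequence of real random variables, each taking values in a fixed set {a_1, …, a_N} of N distinct reals with P(X_n = a_k) > 0 for every n and k, and assume F = σ(X_n : n ≥ 1). Then the linear span of the family {X_1^{α_1} · X_2^{α_2} ⋯ X_n^{α_n} : n ≥ 1, (α_1, …, α_n) ∈ {0, 1, …, N−1}^n} is dense in L²(Ω, F, P). -/
/-!
Since `X i` takes only the `N` values `a k`, Lagrange (Vandermonde) interpolation writes the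
indicator of `{X i ∈ B}` as a polynomial of degree `< N` in `X i`, so the indicator of a cylinder
`⋂ i < n, {X i ∈ B i}` is a linear combination of the monomials. An `L²` function orthogonal to
all monomials thus integrates to zero over every cylinder; the cylinders form a π-system generating
the σ-algebra, so it integrates to zero over every measurable set and hence vanishes.
-/

open MeasureTheory MeasurableSpace Matrix

theorem exists_sum_mul_pow_eq_of_injective {K : Type*} [Field K] {N : ℕ} {a : Fin N → K}
    (ha : Function.Injective a) (r : Fin N → K) :
    ∃ c : Fin N → K, ∀ k, ∑ j, c j * a k ^ (j : ℕ) = r k := by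
  have hV : IsUnit (vandermonde a).det := isUnit_iff_ne_zero.2 (det_vandermonde_ne_zero_iff.2 ha)
  refine ⟨(vandermonde a)⁻¹ *ᵥ r, fun k => ?_⟩
  have hsolve : vandermonde a *ᵥ ((vandermonde a)⁻¹ *ᵥ r) = r := by
    rw [mulVec_mulVec, mul_nonsing_inv _ hV, one_mulVec]
  simpa [mulVec, dotProduct, vandermonde_apply, mul_comm] using congrFun hsolve k

theorem exists_indicator_iInter_preimage_eq_sum_prod_pow {ι Ω K : Type*} [Fintype ι]
    [DecidableEq ι] [Field K] {N : ℕ} {a : Fin N → K} (ha : Function.Injective a)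
    {X : ι → Ω → K} (hX : ∀ i ω, ∃ k, X i ω = a k) (B : ι → Set K) :
    ∃ c : (ι → Fin N) → K, ∀ ω,
      (⋂ i, X i ⁻¹' B i).indicator 1 ω = ∑ α : ι → Fin N, c α * ∏ i, X i ω ^ (α i : ℕ) := by
  choose c hc using fun i =>
    exists_sum_mul_pow_eq_of_injective ha (fun k => (B i).indicator 1 (a k))
  refine ⟨fun α => ∏ i, c i (α i), fun ω => ?_⟩
  have hfactor : ∀ i, (X i ⁻¹' B i).indicator 1 ω = ∑ j, c i j * X i ω ^ (j : ℕ) := by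
    intro i
    obtain ⟨k, hk⟩ := hX i ω
    rw [hk, hc i k, ← hk]
    rfl
  calc (⋂ i, X i ⁻¹' B i).indicator 1 ω = ∏ i, (X i ⁻¹' B i).indicator 1 ω := by
        rw [prod_indicator_apply]
        simp
    _ = ∏ i, ∑ j, c i j * X i ω ^ (j : ℕ) := Finset.prod_congr rfl fun i _ => hfactor i
    _ = ∑ α : ι → Fin N, ∏ i, c i (α i) * X i ω ^ (α i : ℕ) := Fintype.prod_sum _
    _ = ∑ α : ι → Fin N, (∏ i, c i (α i)) * ∏ i, X i ω ^ (α i : ℕ) := by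
        simp only [Finset.prod_mul_distrib]

theorem memLp_prod_pow {ι Ω : Type*} [MeasurableSpace Ω] {μ : Measure Ω} [IsFiniteMeasure μ]
    {X : ι → Ω → ℝ} (hXm : ∀ i, Measurable (X i)) {C : ℝ} (hC : ∀ i ω, |X i ω| ≤ C)
    (s : Finset ι) (α : ι → ℕ) (p : ENNReal) :
    MemLp (fun ω => ∏ i ∈ s, X i ω ^ α i) p μ := by
  refine MemLp.of_bound
    (Finset.measurable_prod _ fun i _ => (hXm i).pow_const _).aestronglyMeasurable
    (∏ i ∈ s, C ^ α i) (ae_of_all _ fun ω => ?_)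
  rw [Real.norm_eq_abs, Finset.abs_prod]
  exact Finset.prod_le_prod (fun _ _ => abs_nonneg _)
    fun i _ => (abs_pow _ _).trans_le (pow_le_pow_left₀ (abs_nonneg _) (hC i ω) _)

theorem setIntegral_iInter_preimage_eq_zero_of_forall_integral_prod_pow_mul_eq_zero
    {ι Ω : Type*} [Fintype ι] [DecidableEq ι] [MeasurableSpace Ω] {μ : Measure Ω} {N : ℕ}
    {a : Fin N → ℝ} (ha : Function.Injective a) {X : ι → Ω → ℝ} (hXm : ∀ i, Measurable (X i))
    (hX : ∀ i ω, ∃ k, X i ω = a k) {g : Ω → ℝ}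
    (hint : ∀ α : ι → Fin N, Integrable (fun ω => (∏ i, X i ω ^ (α i : ℕ)) * g ω) μ)
    (horth : ∀ α : ι → Fin N, ∫ ω, (∏ i, X i ω ^ (α i : ℕ)) * g ω ∂μ = 0)
    {B : ι → Set ℝ} (hB : ∀ i, MeasurableSet (B i)) :
    ∫ ω in ⋂ i, X i ⁻¹' B i, g ω ∂μ = 0 := by
  obtain ⟨c, hc⟩ := exists_indicator_iInter_preimage_eq_sum_prod_pow ha hX B
  calc ∫ ω in ⋂ i, X i ⁻¹' B i, g ω ∂μ
      = ∫ ω, (⋂ i, X i ⁻¹' B i).indicator 1 ω * g ω ∂μ := by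
        simp_rw [← Set.indicator_mul_left, Pi.one_apply, one_mul]
        exact (integral_indicator (MeasurableSet.iInter fun i => hXm i (hB i))).symm
    _ = ∑ α, c α * ∫ ω, (∏ i, X i ω ^ (α i : ℕ)) * g ω ∂μ := by
        simp_rw [hc, Finset.sum_mul, mul_assoc]
        rw [integral_finsetSum _ fun α _ => (hint α).const_mul (c α)]
        simp_rw [integral_const_mul]
    _ = 0 := by simp [horth]

theorem L2.integral_mul_eq_zero_of_mem_orthogonal {Ω : Type*} [MeasurableSpace Ω]
    {μ : Measure Ω} {K : Submodule ℝ (Lp ℝ 2 μ)} {f g : Lp ℝ 2 μ} (hg : g ∈ Kᗮ) (hf : f ∈ K) :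
    ∫ ω, f ω * g ω ∂μ = 0 := by
  have hinner := (Submodule.mem_orthogonal K g).1 hg f hf
  rw [L2.inner_def] at hinner
  simpa [mul_comm] using hinner

theorem MeasureTheory.Integrable.ae_eq_zero_of_forall_setIntegral_isPiSystem {α E : Type*}
    {m0 : MeasurableSpace α} {μ : Measure α} [NormedAddCommGroup E] [NormedSpace ℝ E]
    [CompleteSpace E] {S : Set (Set α)} (h_eq : m0 = generateFrom S) (hS : IsPiSystem S)
    {f : α → E} (hf : Integrable f μ) (h_univ : ∫ x, f x ∂μ = 0)
    (h_zero : ∀ s ∈ S, ∫ x in s, f x ∂μ = 0) :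
    f =ᵐ[μ] 0 := by
  have h_all : ∀ t, MeasurableSet t → ∫ x in t, f x ∂μ = 0 := by
    intro t ht
    induction t, ht using induction_on_inter h_eq hS with
    | empty => simp
    | basic s hs => exact h_zero s hs
    | compl s hs hs_zero =>
      have := integral_add_compl hs hf
      rwa [hs_zero, h_univ, zero_add] at this
    | iUnion s hdisj hmeas hs_zero =>
      rw [integral_iUnion hmeas hdisj hf.integrableOn]
      simp [hs_zero]
  exact hf.ae_eq_zero_of_forall_setIntegral_eq_zero fun t ht _ => h_all t ht

theorem exists_iInter_preimage_eq_of_mem_piiUnionInter {Ω β : Type*} [mβ : MeasurableSpace β]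
    {X : ℕ → Ω → β} {s : Set Ω}
    (hs : s ∈ piiUnionInter (fun n => {t | MeasurableSet[mβ.comap (X n)] t}) Set.univ) :
    ∃ n, ∃ B : Fin n → Set β, (∀ i, MeasurableSet (B i)) ∧ ⋂ i : Fin n, X i ⁻¹' B i = s := by
  classical
  obtain ⟨T, -, f, hf, rfl⟩ := hs
  choose! B hB hBf using fun i hi => measurableSet_comap.1 (hf i hi)
  obtain ⟨n, hn⟩ := T.exists_nat_subset_range
  refine ⟨n, fun i => if (i : ℕ) ∈ T then B i else Set.univ, fun i => ?_, ?_⟩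
  · by_cases hi : (i : ℕ) ∈ T <;> simp [hi, hB]
  · ext ω
    simp only [Set.mem_iInter, Set.mem_preimage]
    constructor
    · intro h i hi
      rw [← hBf i hi]
      simpa [hi] using h ⟨i, Finset.mem_range.1 (hn hi)⟩
    · intro h i
      by_cases hi : (i : ℕ) ∈ T
      · simpa [hi, ← hBf i hi] using h i hi
      · simp [hi]

theorem ae_eq_zero_of_forall_setIntegral_iInter_preimage_eq_zero {Ω β E : Type*}
    [m0 : MeasurableSpace Ω] [mβ : MeasurableSpace β] {μ : Measure Ω} [NormedAddCommGroup E]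
    [NormedSpace ℝ E] [CompleteSpace E] {X : ℕ → Ω → β} (hgen : m0 = ⨆ n, mβ.comap (X n))
    {f : Ω → E} (hf : Integrable f μ)
    (h_zero : ∀ n (B : Fin n → Set β), (∀ i, MeasurableSet (B i)) →
      ∫ ω in ⋂ i : Fin n, X i ⁻¹' B i, f ω ∂μ = 0) :
    f =ᵐ[μ] 0 := by
  have h_eq : m0 = generateFrom
      (piiUnionInter (fun n => {t | MeasurableSet[mβ.comap (X n)] t}) Set.univ) := by
    rw [generateFrom_piiUnionInter_measurableSet (fun n => mβ.comap (X n)), hgen]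
    simp
  refine hf.ae_eq_zero_of_forall_setIntegral_isPiSystem h_eq
    (isPiSystem_piiUnionInter _ (fun n => @isPiSystem_measurableSet Ω (mβ.comap (X n))) _)
    (by simpa using h_zero 0 Fin.elim0 fun i => i.elim0) fun s hs => ?_
  obtain ⟨n, B, hB, rfl⟩ := exists_iInter_preimage_eq_of_mem_piiUnionInter hs
  exact h_zero n B hB

theorem stmt_14_general {Ω : Type*} [MeasurableSpace Ω] (P : Measure Ω)
    [IsProbabilityMeasure P] (X : ℕ → Ω → ℝ) (hXm : ∀ n, Measurable (X n))
    (N : ℕ) (a : Fin N → ℝ) (ha : Function.Injective a)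
    (hval : ∀ n ω, ∃ k : Fin N, X n ω = a k)
    (hgen : (inferInstance : MeasurableSpace Ω) =
      ⨆ n : ℕ, MeasurableSpace.comap (X n) (inferInstance : MeasurableSpace ℝ)) :
    Dense (↑(Submodule.span ℝ
      {f : Lp ℝ 2 P | ∃ (n : ℕ) (α : Fin n → Fin N),
        ∀ᵐ ω ∂P, f ω = ∏ i : Fin n, X i ω ^ (α i : ℕ)}) :
        Set (Lp ℝ 2 P)) := by
  rw [Submodule.dense_iff_topologicalClosure_eq_top, Submodule.topologicalClosure_eq_top_iff,
    Submodule.eq_bot_iff]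
  intro g hg
  obtain ⟨C, hC⟩ : ∃ C, ∀ n ω, |X n ω| ≤ C := ⟨∑ k, |a k|, fun n ω => by
    obtain ⟨k, hk⟩ := hval n ω
    rw [hk]
    exact Finset.single_le_sum (f := fun k => |a k|) (fun _ _ => abs_nonneg _) (Finset.mem_univ k)⟩
  have hmemLp : ∀ n (α : Fin n → Fin N), MemLp (fun ω => ∏ i : Fin n, X i ω ^ (α i : ℕ)) 2 P :=
    fun n α => memLp_prod_pow (fun i : Fin n => hXm i) (fun i => hC i) _ _ _
  have horth : ∀ n (α : Fin n → Fin N), ∫ ω, (∏ i : Fin n, X i ω ^ (α i : ℕ)) * g ω ∂P = 0 := by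
    intro n α
    rw [← L2.integral_mul_eq_zero_of_mem_orthogonal hg
      (Submodule.subset_span ⟨n, α, (hmemLp n α).coeFn_toLp⟩)]
    refine integral_congr_ae ?_
    filter_upwards [(hmemLp n α).coeFn_toLp] with ω h
    rw [h]
  refine Lp.eq_zero_iff_ae_eq_zero.2 <| ae_eq_zero_of_forall_setIntegral_iInter_preimage_eq_zero
    hgen ((Lp.memLp g).integrable one_le_two) fun n B hB => ?_
  exact setIntegral_iInter_preimage_eq_zero_of_forall_integral_prod_pow_mul_eq_zero ha
    (fun i : Fin n => hXm i) (fun i => hval i)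
    (fun α => (hmemLp n α).integrable_mul (Lp.memLp g)) (horth n) hB

/-- If `(X n)` is a mutually independent sequence of random
variables, each taking values in a fixed set of `N` distinct reals
`a 0, …, a (N-1)` with `P(X n = a k) > 0` for all `n, k`, and generating the
σ-algebra of `Ω`, then the linear span of the products
`X 0 ^ α₀ ⋯ X (n-1) ^ α_{n-1}` with exponents in `{0, …, N-1}` is dense in
`L²(Ω, F, P)`. -/
theorem stmt_14 {Ω : Type*} [MeasurableSpace Ω] (P : Measure Ω)
    [IsProbabilityMeasure P] (X : ℕ → Ω → ℝ) (hXm : ∀ n, Measurable (X n))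
    (hindep : ProbabilityTheory.iIndepFun X P)
    (N : ℕ) (a : Fin N → ℝ) (ha : Function.Injective a)
    (hval : ∀ n ω, ∃ k : Fin N, X n ω = a k)
    (hpos : ∀ (n : ℕ) (k : Fin N), 0 < P {ω | X n ω = a k})
    (hgen : (inferInstance : MeasurableSpace Ω) =
      ⨆ n : ℕ, MeasurableSpace.comap (X n) (inferInstance : MeasurableSpace ℝ)) :
    Dense (↑(Submodule.span ℝ
      {f : Lp ℝ 2 P | ∃ (n : ℕ) (α : Fin n → Fin N),
        ∀ᵐ ω ∂P, f ω = ∏ i : Fin n, X i ω ^ (α i : ℕ)}) :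
        Set (Lp ℝ 2 P)) :=
  stmt_14_general P X hXm N a ha hval hgen
end

section
/- Let c : ℕ × ℕ → ℝ be a double sequence with Σ_{j,k} c(j,k)² < ∞. Then the sequence of partial sums (Σ_{j=0}^{N} c(j,j)·(X_j² − 1))_{N} converges in L²(ν), and the sequence of partial sums (Σ_{j=1}^{N} (Σ_{k=0}^{j−1} c(j,k)·X_k)·X_j)_{N} converges in L²(ν). -/
/-!
Both series are partial sums of orthogonal series in `L²(ν)` whose terms have summable squared
norms, so they converge by Pythagoras and completeness of `L²`. The diagonal terms
`c (j, j) * (X j ^ 2 - 1)` are independent and centred, with `E[(X j ^ 2 - 1) ^ 2] = E[X j ^ 4] - 1`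
bounded. The off-diagonal terms are `S j * X j` with `S j = ∑ k < j, c (j, k) * X k` measurable with
respect to `σ(X k : k < j)`, which is independent of the centred `X j`: they are martingale
differences, hence orthogonal, and `E[(S j * X j) ^ 2] = E[S j ^ 2] = ∑ k < j, c (j, k) ^ 2`.
-/

open MeasureTheory ProbabilityTheory Filter Finset

section InnerProductSpace

variable {V : Type*} [NormedAddCommGroup V] [InnerProductSpace ℝ V]

theorem norm_sum_sq_of_pairwise_inner_eq_zero {ι : Type*} {v : ι → V}
    (hv : Pairwise fun i j => inner ℝ (v i) (v j) = 0) (s : Finset ι) :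
    ‖∑ i ∈ s, v i‖ ^ 2 = ∑ i ∈ s, ‖v i‖ ^ 2 := by
  classical
  rw [← real_inner_self_eq_norm_sq, sum_inner]
  refine sum_congr rfl fun i hi => ?_
  rw [inner_sum, sum_eq_single_of_mem i hi fun j _ hji => hv hji.symm, real_inner_self_eq_norm_sq]

theorem summable_of_pairwise_inner_eq_zero [CompleteSpace V] {ι : Type*} {v : ι → V}
    (hv : Pairwise fun i j => inner ℝ (v i) (v j) = 0) (hsum : Summable fun i => ‖v i‖ ^ 2) :
    Summable v := by
  rw [summable_iff_vanishing_norm]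
  intro ε hε
  obtain ⟨s, hs⟩ := summable_iff_vanishing_norm.mp hsum (ε ^ 2) (by positivity)
  refine ⟨s, fun t ht => ?_⟩
  have h := hs t ht
  rw [Real.norm_of_nonneg (sum_nonneg fun i _ => sq_nonneg _),
    ← norm_sum_sq_of_pairwise_inner_eq_zero hv] at h
  exact lt_of_pow_lt_pow_left₀ 2 hε.le h

end InnerProductSpace

section

variable {Ω : Type*} [MeasurableSpace Ω] {μ : Measure Ω}

theorem MeasureTheory.MemLp.inner_toLp_toLp {f g : Ω → ℝ} (hf : MemLp f 2 μ) (hg : MemLp g 2 μ) :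
    inner ℝ (hf.toLp f) (hg.toLp g) = ∫ ω, f ω * g ω ∂μ := by
  rw [L2.inner_def]
  refine integral_congr_ae ?_
  filter_upwards [hf.coeFn_toLp, hg.coeFn_toLp] with ω hfω hgω
  simp [hfω, hgω, mul_comm]

theorem MeasureTheory.MemLp.norm_toLp_sq {f : Ω → ℝ} (hf : MemLp f 2 μ) :
    ‖hf.toLp f‖ ^ 2 = ∫ ω, f ω ^ 2 ∂μ := by
  simp_rw [← real_inner_self_eq_norm_sq, hf.inner_toLp_toLp hf, sq]

theorem exists_tendsto_eLpNorm_sum_range_sub_of_orthogonal {f : ℕ → Ω → ℝ}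
    (hf : ∀ j, MemLp (f j) 2 μ) (horth : Pairwise fun i j => ∫ ω, f i ω * f j ω ∂μ = 0)
    (hsum : Summable fun j => ∫ ω, f j ω ^ 2 ∂μ) :
    ∃ g : Ω → ℝ, MemLp g 2 μ ∧
      Tendsto (fun N : ℕ => eLpNorm (fun ω => (∑ j ∈ range (N + 1), f j ω) - g ω) 2 μ)
        atTop (nhds 0) := by
  set F : ℕ → Lp ℝ 2 μ := fun j => (hf j).toLp (f j)
  obtain ⟨G, hG⟩ := summable_of_pairwise_inner_eq_zero (v := F)
    (fun i j hij => ((hf i).inner_toLp_toLp (hf j)).trans (horth hij))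
    (hsum.congr fun j => ((hf j).norm_toLp_sq).symm)
  refine ⟨G, Lp.memLp G, ?_⟩
  refine ((Lp.tendsto_Lp_iff_tendsto_eLpNorm' _ G).mp
    (hG.tendsto_sum_nat.comp (tendsto_add_atTop_nat 1))).congr fun N => eLpNorm_congr_ae ?_
  filter_upwards [Lp.coeFn_fun_finsetSum (range (N + 1)) F,
    ae_all_iff.2 fun j => (hf j).coeFn_toLp] with ω hsumω hFω
  rw [Pi.sub_apply, Function.comp_apply, hsumω]
  simp only [F, hFω]

theorem integral_sq_finset_sum_of_orthogonal {ι : Type*} {f : ι → Ω → ℝ}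
    (hf : ∀ i, MemLp (f i) 2 μ) (horth : Pairwise fun i j => ∫ ω, f i ω * f j ω ∂μ = 0)
    (s : Finset ι) :
    ∫ ω, (∑ i ∈ s, f i ω) ^ 2 ∂μ = ∑ i ∈ s, ∫ ω, f i ω ^ 2 ∂μ := by
  classical
  have hint : ∀ i j, Integrable (fun ω => f i ω * f j ω) μ := fun i j =>
    (hf i).integrable_mul (hf j)
  simp_rw [sq, sum_mul_sum]
  rw [integral_finsetSum _ fun i _ => integrable_finsetSum _ fun j _ => hint i j]
  refine sum_congr rfl fun i hi => ?_
  rw [integral_finsetSum _ fun j _ => hint i j,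
    sum_eq_single_of_mem i hi fun j _ hji => horth hji.symm]

theorem MeasureTheory.MemLp.mul_of_four {f g : Ω → ℝ} (hf : MemLp f 4 μ) (hg : MemLp g 4 μ) :
    MemLp (fun ω => f ω * g ω) 2 μ :=
  haveI : ENNReal.HolderTriple 4 4 2 := ⟨by
    rw [← two_mul, show (4 : ENNReal) = 2 * 2 by norm_num, ENNReal.mul_inv (by simp) (by simp),
      ← mul_assoc, ENNReal.mul_inv_cancel (by simp) (by simp), one_mul]⟩
  hg.mul' hf

theorem MeasureTheory.MemLp.sq_of_four {f : Ω → ℝ} (hf : MemLp f 4 μ) :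
    MemLp (fun ω => f ω ^ 2) 2 μ := by
  simpa only [sq] using hf.mul_of_four hf

theorem ProbabilityTheory.iIndepFun.indepFun_of_measurable_biSup {ι β γ : Type*}
    [mβ : MeasurableSpace β] [MeasurableSpace γ] {X : ι → Ω → β} (h : iIndepFun X μ)
    (hX : ∀ i, Measurable (X i)) {s : Set ι} {j : ι} (hj : j ∉ s) {Y : Ω → γ}
    (hY : Measurable[⨆ i ∈ s, mβ.comap (X i)] Y) : IndepFun Y (X j) μ := by
  rw [IndepFun_iff_Indep]
  have hindep := indep_iSup_of_disjoint (fun i => (hX i).comap_le) h.iIndep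
    (Set.disjoint_singleton_right.2 hj)
  exact indep_of_indep_of_le_right (indep_of_indep_of_le_left hindep hY.comap_le)
    (le_iSup₂ (f := fun i (_ : i ∈ ({j} : Set ι)) => mβ.comap (X i)) j rfl)

theorem ProbabilityTheory.IndepFun.integral_mul_eq_zero [IsFiniteMeasure μ] {Y Z : Ω → ℝ}
    (h : IndepFun Y Z μ) (hY : AEStronglyMeasurable Y μ) (hZ : AEStronglyMeasurable Z μ)
    (hZ0 : ∫ ω, Z ω ∂μ = 0) : ∫ ω, Y ω * Z ω ∂μ = 0 := by
  rw [h.integral_fun_mul_eq_mul_integral hY hZ, hZ0, mul_zero]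

end

section SigmaBefore

variable {Ω : Type*}

abbrev sigmaBefore (X : ℕ → Ω → ℝ) (j : ℕ) : MeasurableSpace Ω :=
  ⨆ k ∈ Set.Iio j, MeasurableSpace.comap (X k) inferInstance

variable {X : ℕ → Ω → ℝ}

theorem measurable_sigmaBefore {k j : ℕ} (hkj : k < j) : Measurable[sigmaBefore X j] (X k) :=
  measurable_iff_comap_le.2 <|
    le_iSup₂ (f := fun i (_ : i ∈ Set.Iio j) => MeasurableSpace.comap (X i) inferInstance) k hkj

theorem sigmaBefore_mono : Monotone (sigmaBefore X) := fun _ _ hij =>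
  biSup_mono fun _ hk => lt_of_lt_of_le hk hij

theorem sigmaBefore_le [mΩ : MeasurableSpace Ω] (hXm : ∀ k, Measurable (X k)) (j : ℕ) :
    sigmaBefore X j ≤ mΩ :=
  iSup₂_le fun k _ => (hXm k).comap_le

end SigmaBefore

section IndependentSequence

variable {Ω : Type*} [MeasurableSpace Ω] {μ : Measure Ω} {X : ℕ → Ω → ℝ} {S : ℕ → Ω → ℝ}

theorem integral_mul_sq_eq_of_measurable_sigmaBefore (hXm : ∀ k, Measurable (X k))
    (hindep : iIndepFun X μ) (hred : ∀ k, ∫ ω, X k ω ^ 2 ∂μ = 1) {j : ℕ}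
    (hS : Measurable[sigmaBefore X j] (S j)) :
    ∫ ω, (S j ω * X j ω) ^ 2 ∂μ = ∫ ω, S j ω ^ 2 ∂μ := by
  have hind := (hindep.indepFun_of_measurable_biSup hXm (s := Set.Iio j) (lt_irrefl j) hS).comp
    (measurable_id.pow_const 2) (measurable_id.pow_const 2)
  have hSm : Measurable (S j) := hS.mono (sigmaBefore_le hXm j) le_rfl
  have h := hind.integral_fun_mul_eq_mul_integral (by fun_prop) (by fun_prop)
  simp only [Function.comp_apply, id] at h
  simp_rw [mul_pow]
  rw [h, hred j, mul_one]

variable [IsProbabilityMeasure μ]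

theorem integral_sq_sub_one_sq {Y : Ω → ℝ} (hY : MemLp Y 4 μ) (h2 : ∫ ω, Y ω ^ 2 ∂μ = 1) :
    ∫ ω, (Y ω ^ 2 - 1) ^ 2 ∂μ = ∫ ω, Y ω ^ 4 ∂μ - 1 := by
  have hY2 := hY.sq_of_four
  have hint2 : Integrable (fun ω => Y ω ^ 2) μ := hY2.integrable one_le_two
  have hint4 : Integrable (fun ω => Y ω ^ 4) μ := by
    have h : Integrable (fun ω => Y ω ^ 2 * Y ω ^ 2) μ := hY2.integrable_mul hY2
    simpa only [← pow_add] using h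
  calc ∫ ω, (Y ω ^ 2 - 1) ^ 2 ∂μ = ∫ ω, (Y ω ^ 4 - 2 * Y ω ^ 2 + 1) ∂μ := by
        congr 1; ext ω; ring
    _ = ∫ ω, Y ω ^ 4 ∂μ - 1 := by
        rw [integral_add (f := fun ω => Y ω ^ 4 - 2 * Y ω ^ 2) (hint4.sub (hint2.const_mul 2))
            (integrable_const 1),
          integral_sub hint4 (hint2.const_mul 2), integral_const_mul, h2, integral_const,
          probReal_univ, smul_eq_mul]
        ring

theorem exists_tendsto_eLpNorm_sum_mul_sq_sub_one (hXm : ∀ k, Measurable (X k))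
    (hindep : iIndepFun X μ) (hred : ∀ k, ∫ ω, X k ω ^ 2 ∂μ = 1) (hX4 : ∀ k, MemLp (X k) 4 μ)
    {C : ℝ} (hC : ∀ k, ∫ ω, X k ω ^ 4 ∂μ ≤ C) {a : ℕ → ℝ} (ha : Summable fun j => a j ^ 2) :
    ∃ g : Ω → ℝ, MemLp g 2 μ ∧
      Tendsto (fun N : ℕ =>
          eLpNorm (fun ω => (∑ j ∈ range (N + 1), a j * (X j ω ^ 2 - 1)) - g ω) 2 μ)
        atTop (nhds 0) := by
  have hX2 : ∀ j, MemLp (fun ω => X j ω ^ 2) 2 μ := fun j => (hX4 j).sq_of_four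
  have hY : ∀ j, MemLp (fun ω => X j ω ^ 2 - 1) 2 μ := fun j => (hX2 j).sub (memLp_const 1)
  have hYm : ∀ j, Measurable fun x : ℝ => a j * (x ^ 2 - 1) := fun j => by fun_prop
  refine exists_tendsto_eLpNorm_sum_range_sub_of_orthogonal (fun j => (hY j).const_mul (a j))
    (fun i j hij => ?_) ?_
  · refine ((hindep.indepFun hij).comp (hYm i) (hYm j)).integral_mul_eq_zero
      ((hYm i).comp (hXm i)).aestronglyMeasurable ((hYm j).comp (hXm j)).aestronglyMeasurable ?_
    simp only [Function.comp_apply]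
    rw [integral_const_mul, integral_sub ((hX2 j).integrable one_le_two) (integrable_const 1),
      hred j]
    simp
  · refine Summable.of_nonneg_of_le (fun j => integral_nonneg fun ω => sq_nonneg _)
      (fun j => ?_) (ha.mul_right C)
    calc ∫ ω, (a j * (X j ω ^ 2 - 1)) ^ 2 ∂μ = a j ^ 2 * ∫ ω, (X j ω ^ 2 - 1) ^ 2 ∂μ := by
          rw [← integral_const_mul]; congr 1; ext ω; ring
      _ = a j ^ 2 * (∫ ω, X j ω ^ 4 ∂μ - 1) := by rw [integral_sq_sub_one_sq (hX4 j) (hred j)]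
      _ ≤ a j ^ 2 * C := mul_le_mul_of_nonneg_left (by linarith [hC j]) (sq_nonneg _)

theorem integral_sq_sum_mul_of_iIndepFun (hXm : ∀ k, Measurable (X k))
    (hindep : iIndepFun X μ) (hcent : ∀ k, ∫ ω, X k ω ∂μ = 0)
    (hred : ∀ k, ∫ ω, X k ω ^ 2 ∂μ = 1) (hX2 : ∀ k, MemLp (X k) 2 μ) (b : ℕ → ℝ)
    (s : Finset ℕ) :
    ∫ ω, (∑ k ∈ s, b k * X k ω) ^ 2 ∂μ = ∑ k ∈ s, b k ^ 2 := by
  have horth : Pairwise fun k l => ∫ ω, b k * X k ω * (b l * X l ω) ∂μ = 0 := by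
    intro k l hkl
    calc ∫ ω, b k * X k ω * (b l * X l ω) ∂μ = b k * b l * ∫ ω, X k ω * X l ω ∂μ := by
          rw [← integral_const_mul]; congr 1; ext ω; ring
      _ = 0 := by
          rw [(hindep.indepFun hkl).integral_mul_eq_zero (hXm k).aestronglyMeasurable
            (hXm l).aestronglyMeasurable (hcent l), mul_zero]
  rw [integral_sq_finset_sum_of_orthogonal (fun k => (hX2 k).const_mul (b k)) horth]
  refine sum_congr rfl fun k _ => ?_
  simp_rw [mul_pow, integral_const_mul, hred k, mul_one]

theorem integral_mul_mul_eq_zero_of_measurable_sigmaBefore (hXm : ∀ k, Measurable (X k))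
    (hindep : iIndepFun X μ) (hcent : ∀ k, ∫ ω, X k ω ∂μ = 0)
    (hS : ∀ j, Measurable[sigmaBefore X j] (S j)) {i j : ℕ} (hij : i < j) :
    ∫ ω, S i ω * X i ω * (S j ω * X j ω) ∂μ = 0 := by
  have hY : Measurable[sigmaBefore X j] fun ω => S i ω * X i ω * S j ω :=
    (((hS i).mono (sigmaBefore_mono hij.le) le_rfl).mul (measurable_sigmaBefore hij)).mul (hS j)
  simp_rw [← mul_assoc]
  exact (hindep.indepFun_of_measurable_biSup hXm (s := Set.Iio j) (lt_irrefl j)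
    hY).integral_mul_eq_zero (hY.mono (sigmaBefore_le hXm j) le_rfl).aestronglyMeasurable
    (hXm j).aestronglyMeasurable (hcent j)

theorem exists_tendsto_eLpNorm_sum_sum_range_mul (hXm : ∀ k, Measurable (X k))
    (hindep : iIndepFun X μ) (hcent : ∀ k, ∫ ω, X k ω ∂μ = 0)
    (hred : ∀ k, ∫ ω, X k ω ^ 2 ∂μ = 1) (hX4 : ∀ k, MemLp (X k) 4 μ) {c : ℕ × ℕ → ℝ}
    (hc : Summable fun jk : ℕ × ℕ => c jk ^ 2) :
    ∃ g : Ω → ℝ, MemLp g 2 μ ∧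
      Tendsto (fun N : ℕ => eLpNorm (fun ω =>
          (∑ j ∈ range (N + 1), (∑ k ∈ range j, c (j, k) * X k ω) * X j ω) - g ω) 2 μ)
        atTop (nhds 0) := by
  set S : ℕ → Ω → ℝ := fun j ω => ∑ k ∈ range j, c (j, k) * X k ω
  have hS : ∀ j, Measurable[sigmaBefore X j] (S j) := fun j =>
    Finset.measurable_sum _ fun k hk => (measurable_sigmaBefore (mem_range.1 hk)).const_mul _
  have hS4 : ∀ j, MemLp (S j) 4 μ := fun j => memLp_finsetSum _ fun k _ => (hX4 k).const_mul _
  refine exists_tendsto_eLpNorm_sum_range_sub_of_orthogonal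
    (fun j => (hS4 j).mul_of_four (hX4 j)) (fun i j hij => ?_) ?_
  · rcases hij.lt_or_gt with h | h
    · exact integral_mul_mul_eq_zero_of_measurable_sigmaBefore hXm hindep hcent hS h
    · rw [← integral_mul_mul_eq_zero_of_measurable_sigmaBefore hXm hindep hcent hS h]
      congr 1; ext ω; ring
  · refine Summable.of_nonneg_of_le (fun j => integral_nonneg fun ω => sq_nonneg _)
      (fun j => ?_) hc.prod
    rw [integral_mul_sq_eq_of_measurable_sigmaBefore hXm hindep hred (hS j),
      integral_sq_sum_mul_of_iIndepFun hXm hindep hcent hred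
        (fun k => (hX4 k).mono_exponent (by norm_num))]
    exact (hc.prod_factor j).sum_le_tsum _ fun k _ => sq_nonneg _

end IndependentSequence

/-- Let `(X k)` be mutually independent, centered, reduced real
random variables with uniformly bounded fourth moments, and `c : ℕ × ℕ → ℝ`
square-summable. Then the partial sums `∑_{j=0}^N c (j,j)·(X j ² - 1)` and
`∑_{j=1}^N (∑_{k=0}^{j-1} c (j,k)·X k)·X j` both converge in `L²(ν)`. -/
theorem stmt_17 {E : Type*} [MeasurableSpace E] (ν : Measure E)
    [IsProbabilityMeasure ν] (X : ℕ → E → ℝ) (hXm : ∀ k, Measurable (X k))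
    (hindep : ProbabilityTheory.iIndepFun (m :=
      fun _ : ℕ => (inferInstance : MeasurableSpace ℝ)) X ν)
    (hcent : ∀ k, ∫ ω, X k ω ∂ν = 0)
    (hred : ∀ k, ∫ ω, X k ω ^ 2 ∂ν = 1)
    (hX4 : ∀ k, MemLp (X k) 4 ν)
    (hsup : ∃ C : ℝ, ∀ k, ∫ ω, X k ω ^ 4 ∂ν ≤ C)
    (c : ℕ × ℕ → ℝ) (hc : Summable fun jk : ℕ × ℕ => c jk ^ 2) :
    (∃ g : E → ℝ, MemLp g 2 ν ∧
      Tendsto (fun N : ℕ => eLpNorm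
        (fun ω => (∑ j ∈ Finset.range (N + 1), c (j, j) * (X j ω ^ 2 - 1)) - g ω)
        2 ν) atTop (nhds 0)) ∧
    (∃ g : E → ℝ, MemLp g 2 ν ∧
      Tendsto (fun N : ℕ => eLpNorm
        (fun ω => (∑ j ∈ Finset.Icc 1 N,
          (∑ k ∈ Finset.range j, c (j, k) * X k ω) * X j ω) - g ω)
        2 ν) atTop (nhds 0)) := by
  obtain ⟨C, hC⟩ := hsup
  refine ⟨exists_tendsto_eLpNorm_sum_mul_sq_sub_one hXm hindep hred hX4 hC
    (hc.comp_injective fun i j hij => (Prod.ext_iff.1 hij).1), ?_⟩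
  obtain ⟨g, hg, htends⟩ := exists_tendsto_eLpNorm_sum_sum_range_mul hXm hindep hcent hred hX4 hc
  refine ⟨g, hg, htends.congr fun N => ?_⟩
  congr 1; ext ω
  rw [range_eq_Ico, sum_eq_sum_Ico_succ_bot (Nat.add_one_pos N), zero_add,
    Ico_add_one_right_eq_Icc, range_zero, sum_empty, zero_mul, zero_add]
end

section
/- Let μ be a probability measure on ℝ, let H = L²(ℝ, B(ℝ), μ) be separable with Hilbert basis (e_j)_{j∈ℕ}, and define: Φ(h) = the L²(ν)-limit of Σ_{k=0}^{n} ⟨h, e_k⟩·X_k; φ^{(2)}(f) = the L²(ν)-limit of Σ_{j=0}^{N} ⟨f, e_j ⊗ e_j⟩·(X_j² − 1) for f ∈ H ⊗ H; and φ^{(1,1)}(f) = the L²(ν)-limit of Σ_{j=1}^{N} (Σ_{k=0}^{j−1} ⟨f, e_j ⊗ e_k⟩·X_k)·X_j for f ∈ H ⊗ H (all these limits exist). Then for all h, g ∈ H, the product Φ(h)·Φ(g) belongs to L²(ν), and in L²(ν): Φ(h)·Φ(g) = φ^{(2)}(h ⊗ g) + φ^{(1,1)}(h ⊗ g + g ⊗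 h) + ⟨h, g⟩·1. -/
open MeasureTheory Filter
open scoped Topology

/-! Since `⟨h ⊗ g, e_j ⊗ e_k⟩ = ⟨h, e_j⟩⟨g, e_k⟩`, multiplying out the partial sums
`Sₙ h = ∑_{k≤n} ⟨h, e_k⟩ X_k` gives exactly the `n`-th partial sums of `φ⁽²⁾(h ⊗ g)` and
`φ⁽¹'¹⁾(h ⊗ g + g ⊗ h)` plus `∑_{j≤n} ⟨h, e_j⟩⟨g, e_j⟩`. By Hölder, `Sₙ h · Sₙ g → Φ h · Φ g`
in `L¹(ν)`; by Parseval, the right-hand side converges in `L²(ν)` to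
`φ⁽²⁾(h ⊗ g) + φ⁽¹'¹⁾(h ⊗ g + g ⊗ h) + ⟨h, g⟩`. Both convergences imply convergence in measure,
whose limits agree a.e.; in particular `Φ h · Φ g ∈ L²(ν)`. -/

section Algebra

open Finset

theorem sum_range_mul_sum_range_eq_diag_add_offDiag {R : Type*} [CommRing R]
    (a b x : ℕ → R) (n : ℕ) :
    (∑ k ∈ range (n + 1), a k * x k) * (∑ k ∈ range (n + 1), b k * x k) =
      ∑ j ∈ range (n + 1), a j * b j * (x j ^ 2 - 1)
      + ∑ j ∈ Icc 1 n, (∑ k ∈ range j, (a j * b k + b j * a k) * x k) * x j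
      + ∑ j ∈ range (n + 1), a j * b j := by
  induction n with
  | zero =>
    simp only [zero_add, range_one, sum_singleton, Icc_eq_empty_of_lt zero_lt_one, sum_empty]
    ring
  | succ n ih =>
    have hnew : ∑ k ∈ range (n + 1), (a (n + 1) * b k + b (n + 1) * a k) * x k =
        a (n + 1) * ∑ k ∈ range (n + 1), b k * x k
          + b (n + 1) * ∑ k ∈ range (n + 1), a k * x k := by
      rw [mul_sum, mul_sum, ← sum_add_distrib]
      exact sum_congr rfl fun k _ => by ring
    rw [sum_range_succ (fun k => a k * x k), sum_range_succ (fun k => b k * x k),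
      sum_range_succ (fun j => a j * b j * (x j ^ 2 - 1)), sum_range_succ (fun j => a j * b j),
      sum_Icc_succ_top (Nat.le_add_left 1 n), hnew]
    linear_combination ih

end Algebra

section Products

variable {α β : Type*} [MeasurableSpace α] [MeasurableSpace β] {μ : Measure α} {ν : Measure β}

theorem integral_prod_mul_mul [SFinite μ] [SFinite ν] (f u : α → ℝ) (g v : β → ℝ) :
    ∫ q, f q.1 * g q.2 * (u q.1 * v q.2) ∂(μ.prod ν) =
      (∫ x, f x * u x ∂μ) * ∫ y, g y * v y ∂ν := by
  rw [← integral_prod_mul]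
  exact integral_congr_ae (.of_forall fun q => by ring)

theorem integral_prod_add_mul_mul [SFinite μ] {f g u v : α → ℝ}
    (hfu : Integrable (fun x => f x * u x) μ) (hgv : Integrable (fun x => g x * v x) μ)
    (hgu : Integrable (fun x => g x * u x) μ) (hfv : Integrable (fun x => f x * v x) μ) :
    ∫ q, (f q.1 * g q.2 + g q.1 * f q.2) * (u q.1 * v q.2) ∂(μ.prod μ) =
      (∫ x, f x * u x ∂μ) * (∫ x, g x * v x ∂μ)
        + (∫ x, g x * u x ∂μ) * ∫ x, f x * v x ∂μ := by
  have hint : ∀ {φ ψ : α → ℝ}, Integrable (fun x => φ x * u x) μ →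
      Integrable (fun x => ψ x * v x) μ →
      Integrable (fun q : α × α => φ q.1 * ψ q.2 * (u q.1 * v q.2)) (μ.prod μ) :=
    fun hφ hψ => (hφ.mul_prod hψ).congr (.of_forall fun q => by ring)
  rw [← integral_prod_mul_mul, ← integral_prod_mul_mul,
    ← integral_add (hint hfu hgv) (hint hgu hfv)]
  exact integral_congr_ae (.of_forall fun q => by ring)

end Products

section LpConvergence

variable {α ι : Type*} [MeasurableSpace α] {μ : Measure α} {l : Filter ι}

theorem eLpNorm_mul_le_mul_eLpNorm {𝕜 : Type*} [NormedRing 𝕜] {p q r : ENNReal}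
    [p.HolderTriple q r] {f g : α → 𝕜}
    (hf : AEStronglyMeasurable f μ) (hg : AEStronglyMeasurable g μ) :
    eLpNorm (f * g) r μ ≤ eLpNorm f p μ * eLpNorm g q μ := by
  simpa using eLpNorm_smul_le_mul_eLpNorm (p := p) (q := q) hg hf

theorem tendsto_eLpNorm_mul_sub_mul {S T : ι → α → ℝ} {f g : α → ℝ}
    (hS : ∀ n, AEStronglyMeasurable (S n) μ) (hT : ∀ n, AEStronglyMeasurable (T n) μ)
    (hf : MemLp f 2 μ) (hg : MemLp g 2 μ)
    (hSf : Tendsto (fun n => eLpNorm (S n - f) 2 μ) l (𝓝 0))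
    (hTg : Tendsto (fun n => eLpNorm (T n - g) 2 μ) l (𝓝 0)) :
    Tendsto (fun n => eLpNorm (S n * T n - f * g) 1 μ) l (𝓝 0) := by
  have hbound : ∀ n, eLpNorm (S n * T n - f * g) 1 μ ≤
      eLpNorm (S n - f) 2 μ * (eLpNorm (T n - g) 2 μ + eLpNorm g 2 μ)
        + eLpNorm f 2 μ * eLpNorm (T n - g) 2 μ := by
    intro n
    have hSf_meas := (hS n).sub hf.1
    have hTg_meas := (hT n).sub hg.1
    calc eLpNorm (S n * T n - f * g) 1 μ
        = eLpNorm ((S n - f) * T n + f * (T n - g)) 1 μ := by congr 1; ring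
      _ ≤ eLpNorm ((S n - f) * T n) 1 μ + eLpNorm (f * (T n - g)) 1 μ :=
        eLpNorm_add_le (hSf_meas.mul (hT n)) (hf.1.mul hTg_meas) le_rfl
      _ ≤ eLpNorm (S n - f) 2 μ * eLpNorm (T n) 2 μ
            + eLpNorm f 2 μ * eLpNorm (T n - g) 2 μ :=
        add_le_add (eLpNorm_mul_le_mul_eLpNorm hSf_meas (hT n))
          (eLpNorm_mul_le_mul_eLpNorm hf.1 hTg_meas)
      _ ≤ _ := by
        gcongr
        calc eLpNorm (T n) 2 μ = eLpNorm (T n - g + g) 2 μ := by rw [sub_add_cancel]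
          _ ≤ _ := eLpNorm_add_le hTg_meas hg.1 one_le_two
  have hlim : Tendsto (fun n => eLpNorm (S n - f) 2 μ * (eLpNorm (T n - g) 2 μ + eLpNorm g 2 μ)
      + eLpNorm f 2 μ * eLpNorm (T n - g) 2 μ) l (𝓝 (0 * (0 + eLpNorm g 2 μ)
        + eLpNorm f 2 μ * 0)) :=
    (ENNReal.Tendsto.mul hSf (.inr (by simpa using hg.eLpNorm_ne_top))
      (hTg.add tendsto_const_nhds) (.inr ENNReal.zero_ne_top)).add
      (ENNReal.Tendsto.const_mul hTg (.inr hf.eLpNorm_ne_top))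
  simp only [zero_mul, mul_zero, add_zero] at hlim
  exact tendsto_of_tendsto_of_tendsto_of_le_of_le tendsto_const_nhds hlim
    (fun _ => zero_le) hbound

theorem tendsto_eLpNorm_add_sub_add {E : Type*} [NormedAddCommGroup E] {p : ENNReal}
    (hp : 1 ≤ p) {u v : ι → α → E} {f g : α → E}
    (hu : ∀ n, AEStronglyMeasurable (u n) μ) (hv : ∀ n, AEStronglyMeasurable (v n) μ)
    (hf : AEStronglyMeasurable f μ) (hg : AEStronglyMeasurable g μ)
    (huf : Tendsto (fun n => eLpNorm (u n - f) p μ) l (𝓝 0))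
    (hvg : Tendsto (fun n => eLpNorm (v n - g) p μ) l (𝓝 0)) :
    Tendsto (fun n => eLpNorm (u n + v n - (f + g)) p μ) l (𝓝 0) := by
  have hbound : ∀ n, eLpNorm (u n + v n - (f + g)) p μ ≤
      eLpNorm (u n - f) p μ + eLpNorm (v n - g) p μ := fun n => by
    rw [add_sub_add_comm]
    exact eLpNorm_add_le ((hu n).sub hf) ((hv n).sub hg) hp
  have hlim := huf.add hvg
  rw [add_zero] at hlim
  exact tendsto_of_tendsto_of_tendsto_of_le_of_le tendsto_const_nhds hlim
    (fun _ => zero_le) hbound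

theorem tendsto_eLpNorm_const_sub_const {E : Type*} [NormedAddCommGroup E] [IsFiniteMeasure μ]
    {p : ENNReal} {c : ι → E} {a : E} (hc : Tendsto c l (𝓝 a)) :
    Tendsto (fun n => eLpNorm ((fun _ : α => c n) - fun _ => a) p μ) l (𝓝 0) := by
  have hlim : Tendsto (fun n => ‖c n - a‖ₑ * μ Set.univ ^ p.toReal⁻¹) l
      (𝓝 (0 * μ Set.univ ^ p.toReal⁻¹)) := by
    refine ENNReal.Tendsto.mul_const ?_ (.inr ?_)
    · simpa using (tendsto_sub_nhds_zero_iff.2 hc).enorm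
    · exact ENNReal.rpow_ne_top_of_nonneg (by positivity) (measure_ne_top μ _)
  rw [zero_mul] at hlim
  exact tendsto_of_tendsto_of_tendsto_of_le_of_le tendsto_const_nhds hlim
    (fun _ => zero_le) fun n => eLpNorm_le_of_ae_enorm_bound (.of_forall fun _ => le_rfl)

theorem ae_eq_of_tendsto_eLpNorm_sub {E : Type*} [NormedAddCommGroup E] [l.NeBot]
    [l.IsCountablyGenerated] {p q : ENNReal} (hp : p ≠ 0) (hq : q ≠ 0) {u : ι → α → E}
    {f g : α → E} (hu : ∀ n, AEStronglyMeasurable (u n) μ)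
    (hf : AEStronglyMeasurable f μ) (hg : AEStronglyMeasurable g μ)
    (huf : Tendsto (fun n => eLpNorm (u n - f) p μ) l (𝓝 0))
    (hug : Tendsto (fun n => eLpNorm (u n - g) q μ) l (𝓝 0)) :
    f =ᵐ[μ] g :=
  tendstoInMeasure_ae_unique (tendstoInMeasure_of_tendsto_eLpNorm hp hu hf huf)
    (tendstoInMeasure_of_tendsto_eLpNorm hq hu hg hug)

end LpConvergence

section Parseval

variable {α ι : Type*} [MeasurableSpace α] {μ : Measure α}

theorem MeasureTheory.MemLp.inner_toLp {f g : α → ℝ} (hf : MemLp f 2 μ) (hg : MemLp g 2 μ) :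
    inner ℝ (hf.toLp f) (hg.toLp g) = ∫ x, f x * g x ∂μ := by
  rw [L2.inner_def]
  refine integral_congr_ae ?_
  filter_upwards [hf.coeFn_toLp, hg.coeFn_toLp] with x hfx hgx
  simp [hfx, hgx, mul_comm]

variable {e : ι → α → ℝ}

theorem orthonormal_toLp [DecidableEq ι] (he : ∀ i, MemLp (e i) 2 μ)
    (horth : ∀ i j, ∫ x, e i x * e j x ∂μ = if i = j then (1 : ℝ) else 0) :
    Orthonormal ℝ fun i => (he i).toLp (e i) :=
  orthonormal_iff_ite.2 fun i j => by rw [MemLp.inner_toLp, horth]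

theorem orthogonal_span_toLp_eq_bot (he : ∀ i, MemLp (e i) 2 μ)
    (htotal : ∀ f : α → ℝ, MemLp f 2 μ → (∀ i, ∫ x, f x * e i x ∂μ = 0) → f =ᵐ[μ] 0) :
    (Submodule.span ℝ (Set.range fun i => (he i).toLp (e i)))ᗮ = ⊥ := by
  refine (Submodule.eq_bot_iff _).2 fun f hf => Lp.eq_zero_iff_ae_eq_zero.2 ?_
  refine htotal f (Lp.memLp f) fun i => ?_
  have hfi : inner ℝ ((he i).toLp (e i)) f = 0 :=
    (Submodule.mem_orthogonal _ f).1 hf _ (Submodule.subset_span ⟨i, rfl⟩)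
  rwa [← Lp.toLp_coeFn f (Lp.memLp f), real_inner_comm, MemLp.inner_toLp] at hfi

theorem hasSum_integral_mul_mul_integral_mul [DecidableEq ι] (he : ∀ i, MemLp (e i) 2 μ)
    (horth : ∀ i j, ∫ x, e i x * e j x ∂μ = if i = j then (1 : ℝ) else 0)
    (htotal : ∀ f : α → ℝ, MemLp f 2 μ → (∀ i, ∫ x, f x * e i x ∂μ = 0) → f =ᵐ[μ] 0)
    {f g : α → ℝ} (hf : MemLp f 2 μ) (hg : MemLp g 2 μ) :
    HasSum (fun i => (∫ x, f x * e i x ∂μ) * ∫ x, g x * e i x ∂μ) (∫ x, f x * g x ∂μ) := by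
  let b := HilbertBasis.mkOfOrthogonalEqBot (orthonormal_toLp he horth)
    (orthogonal_span_toLp_eq_bot he htotal)
  have hb : ∀ i, b i = (he i).toLp (e i) :=
    congrFun (HilbertBasis.coe_mkOfOrthogonalEqBot _ _)
  simpa only [hb, real_inner_comm (hg.toLp g) ((he _).toLp (e _)), MemLp.inner_toLp] using
    b.hasSum_inner_mul_inner (hf.toLp f) (hg.toLp g)

end Parseval

theorem stmt_18_general {E : Type*} [MeasurableSpace E] (ν : Measure E)
    [IsProbabilityMeasure ν] (X : ℕ → E → ℝ) (hXm : ∀ k, Measurable (X k))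
    (μ : Measure ℝ) [IsProbabilityMeasure μ]
    (e : ℕ → ℝ → ℝ) (he2 : ∀ j, MemLp (e j) 2 μ)
    (horth : ∀ j k, ∫ x, e j x * e k x ∂μ = if j = k then (1 : ℝ) else 0)
    (htotal : ∀ f : ℝ → ℝ, MemLp f 2 μ →
      (∀ j, ∫ x, f x * e j x ∂μ = 0) → f =ᵐ[μ] 0)
    (coef : (ℝ × ℝ → ℝ) → ℕ → ℕ → ℝ)
    (hcoef : ∀ (f : ℝ × ℝ → ℝ) (j k : ℕ),
      coef f j k = ∫ q, f q * (e j q.1 * e k q.2) ∂(μ.prod μ))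
    (h g : ℝ → ℝ) (hh : MemLp h 2 μ) (hg : MemLp g 2 μ)
    (Φh Φg F2 F11 : E → ℝ)
    (hΦh : MemLp Φh 2 ν ∧ Tendsto (fun n : ℕ => eLpNorm
      (fun ω => (∑ k ∈ Finset.range (n + 1), (∫ x, h x * e k x ∂μ) * X k ω)
        - Φh ω) 2 ν) atTop (nhds 0))
    (hΦg : MemLp Φg 2 ν ∧ Tendsto (fun n : ℕ => eLpNorm
      (fun ω => (∑ k ∈ Finset.range (n + 1), (∫ x, g x * e k x ∂μ) * X k ω)
        - Φg ω) 2 ν) atTop (nhds 0))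
    (hF2 : MemLp F2 2 ν ∧ Tendsto (fun N : ℕ => eLpNorm
      (fun ω => (∑ j ∈ Finset.range (N + 1),
        coef (fun q => h q.1 * g q.2) j j * (X j ω ^ 2 - 1)) - F2 ω) 2 ν)
      atTop (nhds 0))
    (hF11 : MemLp F11 2 ν ∧ Tendsto (fun N : ℕ => eLpNorm
      (fun ω => (∑ j ∈ Finset.Icc 1 N,
        (∑ k ∈ Finset.range j,
          coef (fun q => h q.1 * g q.2 + g q.1 * h q.2) j k * X k ω) * X j ω)
        - F11 ω) 2 ν) atTop (nhds 0)) :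
    MemLp (fun ω => Φh ω * Φg ω) 2 ν ∧
    (∀ᵐ ω ∂ν, Φh ω * Φg ω = F2 ω + F11 ω + ∫ x, h x * g x ∂μ) := by
  have hdiag : ∀ j, coef (fun q => h q.1 * g q.2) j j =
      (∫ x, h x * e j x ∂μ) * ∫ x, g x * e j x ∂μ := fun j => by
    rw [hcoef, integral_prod_mul_mul]
  have hsym : ∀ j k, coef (fun q => h q.1 * g q.2 + g q.1 * h q.2) j k =
      (∫ x, h x * e j x ∂μ) * (∫ x, g x * e k x ∂μ)
        + (∫ x, g x * e j x ∂μ) * ∫ x, h x * e k x ∂μ := fun j k => by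
    rw [hcoef, integral_prod_add_mul_mul (hh.integrable_mul (he2 j)) (hg.integrable_mul (he2 k))
      (hg.integrable_mul (he2 j)) (hh.integrable_mul (he2 k))]
  have hparseval : Tendsto (fun n => ∑ j ∈ Finset.range (n + 1),
      (∫ x, h x * e j x ∂μ) * ∫ x, g x * e j x ∂μ) atTop (𝓝 (∫ x, h x * g x ∂μ)) :=
    (hasSum_integral_mul_mul_integral_mul he2 horth htotal hh hg).tendsto_sum_nat.comp
      (tendsto_add_atTop_nat 1)
  have hrhs := tendsto_eLpNorm_add_sub_add one_le_two
    (fun n => by fun_prop) (fun n => by fun_prop)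
    (hF2.1.aestronglyMeasurable.add hF11.1.aestronglyMeasurable) aestronglyMeasurable_const
    (tendsto_eLpNorm_add_sub_add one_le_two (fun n => by fun_prop) (fun n => by fun_prop)
      hF2.1.aestronglyMeasurable hF11.1.aestronglyMeasurable hF2.2 hF11.2)
    (tendsto_eLpNorm_const_sub_const hparseval)
  have hlhs := tendsto_eLpNorm_mul_sub_mul (fun n => by fun_prop) (fun n => by fun_prop)
    hΦh.1 hΦg.1 hΦh.2 hΦg.2
  have hae : Φh * Φg =ᵐ[ν] F2 + F11 + fun _ => ∫ x, h x * g x ∂μ := by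
    refine ae_eq_of_tendsto_eLpNorm_sub one_ne_zero two_ne_zero (fun n => by fun_prop)
      (hΦh.1.1.mul hΦg.1.1) ((hF2.1.1.add hF11.1.1).add aestronglyMeasurable_const) hlhs ?_
    convert hrhs using 4 with n
    funext ω
    simp only [Pi.mul_apply, Pi.add_apply, hdiag, hsym]
    exact sum_range_mul_sum_range_eq_diag_add_offDiag _ _ (fun k => X k ω) n
  exact ⟨(memLp_congr_ae hae).2 ((hF2.1.add hF11.1).add (memLp_const _)), hae⟩

/-- With `(X k)` a mutually independent, centered, reduced
sequence with uniformly bounded `p`-th moments for every `p > 1`, `(e j)` a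
Hilbert basis of `H = L²(ℝ, μ)`, `Φ h` the `L²(ν)`-limit of
`∑_{k≤n} ⟨h, e k⟩ X k`, `φ⁽²⁾ f` the limit of
`∑_{j≤N} ⟨f, e j ⊗ e j⟩ (X j ² - 1)` and `φ⁽¹'¹⁾ f` the limit of
`∑_{j=1}^N (∑_{k<j} ⟨f, e j ⊗ e k⟩ X k) X j`, one has, for `h, g ∈ H`,
`Φ h · Φ g ∈ L²(ν)` and
`Φ h · Φ g = φ⁽²⁾(h ⊗ g) + φ⁽¹'¹⁾(h ⊗ g + g ⊗ h) + ⟨h, g⟩` in `L²(ν)`. -/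
theorem stmt_18 {E : Type*} [MeasurableSpace E] (ν : Measure E)
    [IsProbabilityMeasure ν] (X : ℕ → E → ℝ) (hXm : ∀ k, Measurable (X k))
    (hindep : ProbabilityTheory.iIndepFun
      (m := fun _ : ℕ => (inferInstance : MeasurableSpace ℝ)) X ν)
    (hcent : ∀ k, ∫ ω, X k ω ∂ν = 0)
    (hred : ∀ k, ∫ ω, X k ω ^ 2 ∂ν = 1)
    (hmom : ∀ p : ENNReal, 1 < p → p ≠ ⊤ →
      ∃ C : ENNReal, C ≠ ⊤ ∧ ∀ k, eLpNorm (X k) p ν ≤ C)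
    (μ : Measure ℝ) [IsProbabilityMeasure μ]
    (e : ℕ → ℝ → ℝ) (he2 : ∀ j, MemLp (e j) 2 μ)
    (horth : ∀ j k, ∫ x, e j x * e k x ∂μ = if j = k then (1 : ℝ) else 0)
    (htotal : ∀ f : ℝ → ℝ, MemLp f 2 μ →
      (∀ j, ∫ x, f x * e j x ∂μ = 0) → f =ᵐ[μ] 0)
    (coef : (ℝ × ℝ → ℝ) → ℕ → ℕ → ℝ)
    (hcoef : ∀ (f : ℝ × ℝ → ℝ) (j k : ℕ),
      coef f j k = ∫ q, f q * (e j q.1 * e k q.2) ∂(μ.prod μ))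
    (h g : ℝ → ℝ) (hh : MemLp h 2 μ) (hg : MemLp g 2 μ)
    (Φh Φg F2 F11 : E → ℝ)
    (hΦh : MemLp Φh 2 ν ∧ Tendsto (fun n : ℕ => eLpNorm
      (fun ω => (∑ k ∈ Finset.range (n + 1), (∫ x, h x * e k x ∂μ) * X k ω)
        - Φh ω) 2 ν) atTop (nhds 0))
    (hΦg : MemLp Φg 2 ν ∧ Tendsto (fun n : ℕ => eLpNorm
      (fun ω => (∑ k ∈ Finset.range (n + 1), (∫ x, g x * e k x ∂μ) * X k ω)
        - Φg ω) 2 ν) atTop (nhds 0))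
    (hF2 : MemLp F2 2 ν ∧ Tendsto (fun N : ℕ => eLpNorm
      (fun ω => (∑ j ∈ Finset.range (N + 1),
        coef (fun q => h q.1 * g q.2) j j * (X j ω ^ 2 - 1)) - F2 ω) 2 ν)
      atTop (nhds 0))
    (hF11 : MemLp F11 2 ν ∧ Tendsto (fun N : ℕ => eLpNorm
      (fun ω => (∑ j ∈ Finset.Icc 1 N,
        (∑ k ∈ Finset.range j,
          coef (fun q => h q.1 * g q.2 + g q.1 * h q.2) j k * X k ω) * X j ω)
        - F11 ω) 2 ν) atTop (nhds 0)) :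
    MemLp (fun ω => Φh ω * Φg ω) 2 ν ∧
    (∀ᵐ ω ∂ν, Φh ω * Φg ω = F2 ω + F11 ω + ∫ x, h x * g x ∂μ) :=
  stmt_18_general ν X hXm μ e he2 horth htotal coef hcoef h g hh hg Φh Φg F2 F11 hΦh hΦg hF2 hF11
end

section
/- Let (Ω, F, P) be a probability space, T > 0, and X = (X_t)_{0≤t≤T} a real-valued stochastic process (each X_t measurable). Suppose there exist constants α > 0, β > 0, C > 0 and a continuous function F : [0, T] → ℝ of bounded variation such that E[|X_t − X_s|^α] ≤ C·|F(t) − F(s)|^{1+β} for all s, t ∈ [0, T]. Then X admits a continuous modification: there exists a process Y = (Y_t)_{0≤t≤T} such that for every ω the path t ↦ Y_t(ω) is continuous on [0, T], and for every t ∈ [0, T], P(X_t = Y_t) = 1. -/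
/-!
Adding the variation function of `F` to the identity gives a continuous, strictly increasing
`G` on `[0, T]` with `|F t - F s| ≤ |G t - G s|`. In the time scale of `G`, normalised to `[0, 1]`,
the process satisfies the classical Kolmogorov condition `E|Z v - Z u|^α ≤ K |v - u|^(1+β)`.
For that condition, Markov's inequality and Borel–Cantelli show that almost surely the increments
of `Z` over neighbouring dyadic points of level `n` are eventually at most `r^n` for some `r < 1`;
on that event the values at dyadic approximations converge, uniformly enough to give a continuous
limit, and at each fixed time this limit agrees almost surely with `Z`.
-/

open MeasureTheory Set Filter Topology

def HasContinuousModificationOn {Ω ι E : Type*} [MeasurableSpace Ω] [TopologicalSpace ι]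
    [TopologicalSpace E] (X : ι → Ω → E) (P : Measure Ω) (s : Set ι) : Prop :=
  ∃ Y : ι → Ω → E, (∀ ω, ContinuousOn (fun t => Y t ω) s) ∧ ∀ t ∈ s, ∀ᵐ ω ∂P, X t ω = Y t ω

theorem HasContinuousModificationOn.of_comp {Ω ι κ E : Type*} [MeasurableSpace Ω]
    [TopologicalSpace ι] [TopologicalSpace κ] [TopologicalSpace E] {X : ι → Ω → E}
    {P : Measure Ω} {s : Set ι} {t : Set κ} {φ : κ → ι} {ψ : ι → κ}
    (h : HasContinuousModificationOn (fun u => X (φ u)) P t) (hψ : ContinuousOn ψ s)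
    (hψst : MapsTo ψ s t) (hφψ : LeftInvOn φ ψ s) : HasContinuousModificationOn X P s := by
  obtain ⟨Y, hYc, hY⟩ := h
  refine ⟨fun x ω => Y (ψ x) ω, fun ω => (hYc ω).comp hψ hψst, fun x hx => ?_⟩
  simpa only [hφψ hx] using hY (ψ x) (hψst hx)

theorem LocallyBoundedVariationOn.continuousOn_variationOnFromTo {α E : Type*} [LinearOrder α]
    [TopologicalSpace α] [OrderTopology α] [PseudoMetricSpace E] {f : α → E} {s : Set α}
    (hf : LocallyBoundedVariationOn f s) (hfc : ContinuousOn f s) {a : α} (ha : a ∈ s) :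
    ContinuousOn (variationOnFromTo f s a) s := by
  intro b hb
  have hleft := variationOnFromTo.tendsto_left ha hb hf ((hfc b hb).mono inter_subset_left)
  have hright := variationOnFromTo.tendsto_right ha hb hf ((hfc b hb).mono inter_subset_left)
  rw [dist_self, sub_zero] at hleft
  rw [dist_self, add_zero] at hright
  have hleft' : ContinuousWithinAt (variationOnFromTo f s a) (s ∩ Iio b) b := hleft
  refine ContinuousWithinAt.mono (t := (s ∩ Iio b) ∪ ({b} ∪ (s ∩ Ioi b)))
    (hleft'.union (continuousWithinAt_singleton.union hright)) fun x hx => ?_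
  rcases lt_trichotomy x b with h | rfl | h
  · exact Or.inl ⟨hx, h⟩
  · exact Or.inr (Or.inl rfl)
  · exact Or.inr (Or.inr ⟨hx, h⟩)

theorem StrictMonoOn.bijOn_Icc {α δ : Type*} [ConditionallyCompleteLinearOrder α]
    [TopologicalSpace α] [OrderTopology α] [DenselyOrdered α] [LinearOrder δ]
    [TopologicalSpace δ] [OrderClosedTopology δ] {f : α → δ} {a b : α} (hab : a ≤ b)
    (hf : StrictMonoOn f (Icc a b)) (hfc : ContinuousOn f (Icc a b)) :
    BijOn f (Icc a b) (Icc (f a) (f b)) := by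
  have ha : a ∈ Icc a b := left_mem_Icc.2 hab
  have hb : b ∈ Icc a b := right_mem_Icc.2 hab
  refine ⟨fun x hx => ⟨hf.monotoneOn ha hx hx.1, hf.monotoneOn hx hb hx.2⟩, hf.injOn,
    hfc.surjOn_Icc ha hb⟩

theorem BoundedVariationOn.exists_bijOn_Icc_abs_sub_le {F : ℝ → ℝ} {a b : ℝ} (hab : a < b)
    (hF : BoundedVariationOn F (Icc a b)) (hFc : ContinuousOn F (Icc a b)) :
    ∃ ψ : ℝ → ℝ, ∃ L, 0 ≤ L ∧ ContinuousOn ψ (Icc a b) ∧ BijOn ψ (Icc a b) (Icc 0 1) ∧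
      ∀ x ∈ Icc a b, ∀ y ∈ Icc a b, |F y - F x| ≤ L * |ψ y - ψ x| := by
  have hloc := hF.locallyBoundedVariationOn
  have ha : a ∈ Icc a b := left_mem_Icc.2 hab.le
  have hb : b ∈ Icc a b := right_mem_Icc.2 hab.le
  -- the variation controls the increments of `F`; adding `x` makes `G` strictly increasing
  set G : ℝ → ℝ := fun x => x + variationOnFromTo F (Icc a b) a x
  have hGc : ContinuousOn G (Icc a b) :=
    continuousOn_id.add (hloc.continuousOn_variationOnFromTo hFc ha)
  have hGmono : StrictMonoOn G (Icc a b) := fun x hx y hy hxy =>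
    add_lt_add_of_lt_of_le hxy (variationOnFromTo.monotoneOn hloc ha hx hy hxy.le)
  have hFG : ∀ x ∈ Icc a b, ∀ y ∈ Icc a b, x ≤ y → |F y - F x| ≤ G y - G x := fun x hx y hy hxy =>
    (variationOnFromTo.abs_sub_le_sub_of_le hloc ha hx hy hxy).trans (by simp only [G]; linarith)
  set Δ := G b - G a
  have hΔ : 0 < Δ := sub_pos.2 (hGmono ha hb hab)
  set ψ : ℝ → ℝ := fun x => (G x - G a) / Δ
  have hψc : ContinuousOn ψ (Icc a b) := (hGc.sub continuousOn_const).div_const Δ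
  refine ⟨ψ, Δ, hΔ.le, hψc, ?_, fun x hx y hy => ?_⟩
  · have hψmono : StrictMonoOn ψ (Icc a b) := fun x hx y hy hxy =>
      div_lt_div_of_pos_right (sub_lt_sub_right (hGmono hx hy hxy) _) hΔ
    have hψa : ψ a = 0 := by simp [ψ]
    have hψb : ψ b = 1 := div_self hΔ.ne'
    simpa only [hψa, hψb] using hψmono.bijOn_Icc hab.le hψc
  · have hGψ : G y - G x = Δ * (ψ y - ψ x) := by
      simp only [ψ]
      field_simp
      ring
    calc |F y - F x| ≤ |G y - G x| := by
          rcases le_total x y with hxy | hyx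
          · exact (hFG x hx y hy hxy).trans (le_abs_self _)
          · rw [abs_sub_comm, abs_sub_comm (G y)]
            exact (hFG y hy x hx hyx).trans (le_abs_self _)
      _ = Δ * |ψ y - ψ x| := by rw [hGψ, abs_mul, abs_of_pos hΔ]

noncomputable def dyadicFloor (n : ℕ) (u : ℝ) : ℝ := ⌊u * 2 ^ n⌋₊ / 2 ^ n

def DyadicIncrementsLE (f : ℝ → ℝ) (r : ℝ) (n : ℕ) : Prop :=
  ∀ k : ℕ, k < 2 ^ n → |f ((k + 1) / 2 ^ n) - f (k / 2 ^ n)| ≤ r ^ n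

noncomputable def dyadicLimit (f : ℝ → ℝ) (u : ℝ) : ℝ :=
  limUnder atTop fun n => f (dyadicFloor n u)

section Dyadic

variable {f : ℝ → ℝ} {r u v : ℝ} {n : ℕ}

lemma dyadicFloor_le (hu : 0 ≤ u) (n : ℕ) : dyadicFloor n u ≤ u := by
  rw [dyadicFloor, div_le_iff₀ (by positivity)]
  exact Nat.floor_le (by positivity)

lemma sub_dyadicFloor_lt (n : ℕ) (u : ℝ) : u - dyadicFloor n u < 2⁻¹ ^ n := by
  rw [dyadicFloor, inv_pow, ← one_div, sub_lt_iff_lt_add, ← add_div,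
    lt_div_iff₀ (by positivity), add_comm]
  exact Nat.lt_floor_add_one _

lemma dyadicFloor_mem_Icc (hu : u ∈ Icc (0 : ℝ) 1) (n : ℕ) : dyadicFloor n u ∈ Icc (0 : ℝ) 1 :=
  ⟨by unfold dyadicFloor; positivity, (dyadicFloor_le hu.1 n).trans hu.2⟩

lemma DyadicIncrementsLE.abs_sub_le (h : DyadicIncrementsLE f r n) (hr : 0 ≤ r) {j k : ℕ}
    (hjk : j ≤ k) (hkj : k ≤ j + 1) (hk : k ≤ 2 ^ n) :
    |f (k / 2 ^ n) - f (j / 2 ^ n)| ≤ r ^ n := by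
  obtain rfl | rfl : k = j ∨ k = j + 1 := by omega
  · simp [pow_nonneg hr]
  · exact_mod_cast h j hk

lemma DyadicIncrementsLE.abs_sub_dyadicFloor_succ_le (h : DyadicIncrementsLE f r (n + 1))
    (hr : 0 ≤ r) (hu : u ∈ Icc (0 : ℝ) 1) :
    |f (dyadicFloor (n + 1) u) - f (dyadicFloor n u)| ≤ r ^ (n + 1) := by
  set k := ⌊u * 2 ^ (n + 1)⌋₊
  have hm : ⌊u * 2 ^ n⌋₊ = k / 2 := by
    rw [← Nat.floor_div_natCast]
    congr 1
    push_cast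
    ring
  have hdy : dyadicFloor n u = ((2 * (k / 2) : ℕ) : ℝ) / 2 ^ (n + 1) := by
    rw [dyadicFloor, hm]
    push_cast
    field_simp
    ring
  have hk : k ≤ 2 ^ (n + 1) := Nat.floor_le_of_le (by
    push_cast
    nlinarith [hu.2, pow_pos (two_pos : (0 : ℝ) < 2) (n + 1)])
  rw [hdy]
  exact h.abs_sub_le hr (by omega) (by omega) hk

lemma DyadicIncrementsLE.abs_sub_dyadicFloor_le (h : DyadicIncrementsLE f r n) (hr : 0 ≤ r)
    (hu : u ∈ Icc (0 : ℝ) 1) (hv : v ∈ Icc (0 : ℝ) 1) (huv : |v - u| ≤ 2⁻¹ ^ n) :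
    |f (dyadicFloor n v) - f (dyadicFloor n u)| ≤ r ^ n := by
  wlog hle : u ≤ v generalizing u v
  · rw [abs_sub_comm]
    exact this hv hu (by rwa [abs_sub_comm]) (le_of_not_ge hle)
  have h2n : (0 : ℝ) < 2 ^ n := by positivity
  have hclose : v * 2 ^ n ≤ u * 2 ^ n + 1 := by
    have := mul_le_mul_of_nonneg_right ((le_abs_self _).trans huv) h2n.le
    rw [inv_pow, inv_mul_cancel₀ h2n.ne'] at this
    linarith
  have hjk : ⌊u * 2 ^ n⌋₊ ≤ ⌊v * 2 ^ n⌋₊ := Nat.floor_mono (by nlinarith)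
  have hkj : ⌊v * 2 ^ n⌋₊ ≤ ⌊u * 2 ^ n⌋₊ + 1 := by
    rw [← Nat.floor_add_one (by nlinarith [hu.1])]
    exact Nat.floor_mono hclose
  have hk : ⌊v * 2 ^ n⌋₊ ≤ 2 ^ n := Nat.floor_le_of_le (by push_cast; nlinarith [hv.2])
  exact h.abs_sub_le hr hjk hkj hk

lemma tendsto_dyadicLimit {N : ℕ} (hr0 : 0 ≤ r) (hr1 : r < 1)
    (hf : ∀ n ≥ N, DyadicIncrementsLE f r n) (hu : u ∈ Icc (0 : ℝ) 1) :
    Tendsto (fun n => f (dyadicFloor n u)) atTop (𝓝 (dyadicLimit f u)) ∧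
      ∀ m ≥ N, |f (dyadicFloor m u) - dyadicLimit f u| ≤ r ^ m / (1 - r) := by
  set g : ℕ → ℝ := fun i => f (dyadicFloor (N + i) u)
  have hstep : ∀ i, dist (g i) (g (i + 1)) ≤ r ^ N * r ^ i := fun i => by
    rw [dist_comm, Real.dist_eq, ← pow_add]
    exact ((hf (N + i + 1) (by omega)).abs_sub_dyadicFloor_succ_le hr0 hu).trans
      (pow_le_pow_of_le_one hr0 hr1.le (Nat.le_succ _))
  obtain ⟨L, hL⟩ := cauchySeq_tendsto_of_complete (cauchySeq_of_le_geometric r _ hr1 hstep)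
  have htends : Tendsto (fun n => f (dyadicFloor n u)) atTop (𝓝 L) := by
    rw [← tendsto_add_atTop_iff_nat N]
    simpa [g, add_comm] using hL
  have hlim : dyadicLimit f u = L := htends.limUnder_eq
  rw [hlim]
  refine ⟨htends, fun m hm => ?_⟩
  obtain ⟨i, rfl⟩ := Nat.exists_eq_add_of_le hm
  rw [← Real.dist_eq, pow_add]
  exact dist_le_of_le_geometric_of_tendsto r _ hr1 hstep hL i

theorem continuousOn_dyadicLimit (hr0 : 0 ≤ r) (hr1 : r < 1)
    (hf : ∀ᶠ n in atTop, DyadicIncrementsLE f r n) :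
    ContinuousOn (dyadicLimit f) (Icc 0 1) := by
  obtain ⟨N, hN⟩ := eventually_atTop.1 hf
  have hmod : ∀ m ≥ N, ∀ u ∈ Icc (0 : ℝ) 1, ∀ v ∈ Icc (0 : ℝ) 1, |v - u| ≤ 2⁻¹ ^ m →
      |dyadicLimit f v - dyadicLimit f u| ≤ (2 / (1 - r) + 1) * r ^ m := by
    intro m hm u hu v hv huv
    have hfu := (tendsto_dyadicLimit hr0 hr1 hN hu).2 m hm
    have hfv := (tendsto_dyadicLimit hr0 hr1 hN hv).2 m hm
    have hfuv := (hN m hm).abs_sub_dyadicFloor_le hr0 hu hv huv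
    have h1 := abs_sub_le (dyadicLimit f v) (f (dyadicFloor m v)) (dyadicLimit f u)
    have h2 := abs_sub_le (f (dyadicFloor m v)) (f (dyadicFloor m u)) (dyadicLimit f u)
    rw [abs_sub_comm] at hfv
    have hsum : r ^ m / (1 - r) + r ^ m + r ^ m / (1 - r) = (2 / (1 - r) + 1) * r ^ m := by
      field_simp
      ring
    linarith
  rw [Metric.continuousOn_iff]
  intro u hu ε hε
  have hsmall : Tendsto (fun m => (2 / (1 - r) + 1) * r ^ m) atTop (𝓝 0) := by
    simpa using (tendsto_pow_atTop_nhds_zero_of_lt_one hr0 hr1).const_mul (2 / (1 - r) + 1)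
  obtain ⟨m, hmε, hmN⟩ := ((hsmall.eventually (gt_mem_nhds hε)).and (eventually_ge_atTop N)).exists
  refine ⟨2⁻¹ ^ m, by positivity, fun v hv hvu => ?_⟩
  rw [Real.dist_eq] at hvu ⊢
  exact (hmod m hmN u hu v hv hvu.le).trans_lt hmε

end Dyadic

section Kolmogorov

variable {Ω : Type*} [MeasurableSpace Ω] {P : Measure Ω}

lemma measure_lt_abs_le_of_lintegral_rpow_le {W : Ω → ℝ} (hW : AEMeasurable W P) {α ε B : ℝ}
    (hα : 0 < α) (hε : 0 < ε) (h : ∫⁻ ω, ENNReal.ofReal (|W ω| ^ α) ∂P ≤ ENNReal.ofReal B) :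
    P {ω | ε < |W ω|} ≤ ENNReal.ofReal (B / ε ^ α) := by
  have hεα : 0 < ε ^ α := Real.rpow_pos_of_pos hε α
  calc P {ω | ε < |W ω|}
      ≤ P {ω | ENNReal.ofReal (ε ^ α) ≤ ENNReal.ofReal (|W ω| ^ α)} := measure_mono fun ω hω =>
        ENNReal.ofReal_le_ofReal (Real.rpow_le_rpow hε.le (le_of_lt hω) hα.le)
    _ ≤ (∫⁻ ω, ENNReal.ofReal (|W ω| ^ α) ∂P) / ENNReal.ofReal (ε ^ α) :=
        meas_ge_le_lintegral_div (by fun_prop) (ENNReal.ofReal_pos.2 hεα).ne' ENNReal.ofReal_ne_top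
    _ ≤ ENNReal.ofReal B / ENNReal.ofReal (ε ^ α) := by gcongr
    _ = ENNReal.ofReal (B / ε ^ α) := (ENNReal.ofReal_div_of_pos hεα).symm

lemma ae_eventually_notMem_of_le_geometric {s : ℕ → Set Ω} {c ρ : ℝ} (hρ0 : 0 ≤ ρ) (hρ1 : ρ < 1)
    (h : ∀ n, P (s n) ≤ ENNReal.ofReal (c * ρ ^ n)) : ∀ᵐ ω ∂P, ∀ᶠ n in atTop, ω ∉ s n := by
  refine ae_eventually_notMem (ne_top_of_le_ne_top ?_ (ENNReal.tsum_le_tsum h))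
  simp_rw [ENNReal.ofReal_mul' (pow_nonneg hρ0 _), ENNReal.ofReal_pow hρ0]
  rw [ENNReal.tsum_mul_left, ENNReal.tsum_geometric]
  exact ENNReal.mul_ne_top ENNReal.ofReal_ne_top
    (ENNReal.inv_ne_top.2 (tsub_pos_of_lt (ENNReal.ofReal_lt_one.2 hρ1)).ne')

lemma measure_pow_lt_abs_le {W : Ω → ℝ} (hW : AEMeasurable W P) {α β K ρ r : ℝ} (hα : 0 < α)
    (hρ0 : 0 < ρ) (hρ : (2⁻¹ : ℝ) ^ β = ρ * ρ) (hr0 : 0 < r) (hr : r ^ α = ρ) {n : ℕ}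
    (h : ∫⁻ ω, ENNReal.ofReal (|W ω| ^ α) ∂P ≤ ENNReal.ofReal (K * (2⁻¹ ^ n) ^ (1 + β))) :
    P {ω | r ^ n < |W ω|} ≤ ENNReal.ofReal (K * (2⁻¹ * ρ) ^ n) := by
  refine (measure_lt_abs_le_of_lintegral_rpow_le hW hα (pow_pos hr0 n) h).trans_eq (congrArg _ ?_)
  have hrα : (r ^ n) ^ α = ρ ^ n := by rw [← Real.rpow_pow_comm hr0.le, hr]
  have h2 : (2⁻¹ ^ n : ℝ) ^ (1 + β) = 2⁻¹ ^ n * ρ ^ n * ρ ^ n := by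
    rw [Real.rpow_add (by positivity), Real.rpow_one, ← Real.rpow_pow_comm (by norm_num), hρ,
      mul_pow, mul_assoc]
  rw [hrα, h2, mul_pow]
  field_simp

lemma ae_eventually_dyadicIncrementsLE {Z : ℝ → Ω → ℝ} {K ρ r : ℝ} (hρ0 : 0 ≤ ρ) (hρ1 : ρ < 1)
    (hpair : ∀ n : ℕ, ∀ u ∈ Icc (0 : ℝ) 1, ∀ v ∈ Icc (0 : ℝ) 1, |v - u| ≤ 2⁻¹ ^ n →
      P {ω | r ^ n < |Z v ω - Z u ω|} ≤ ENNReal.ofReal (K * (2⁻¹ * ρ) ^ n)) :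
    ∀ᵐ ω ∂P, ∀ᶠ n in atTop, DyadicIncrementsLE (fun u => Z u ω) r n := by
  refine (ae_eventually_notMem_of_le_geometric (c := K)
    (s := fun n => {ω | ¬ DyadicIncrementsLE (fun u => Z u ω) r n}) hρ0 hρ1 fun n => ?_).mono
    fun ω hω => hω.mono fun n hn => not_not.1 hn
  have h2n : (0 : ℝ) < 2 ^ n := by positivity
  have hsub : {ω | ¬ DyadicIncrementsLE (fun u => Z u ω) r n} ⊆
      ⋃ k ∈ Finset.range (2 ^ n), {ω | r ^ n < |Z ((k + 1) / 2 ^ n) ω - Z (k / 2 ^ n) ω|} := by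
    intro ω hω
    simp only [DyadicIncrementsLE, not_forall, not_le, mem_ofPred_eq] at hω
    obtain ⟨k, hk, hlt⟩ := hω
    exact mem_biUnion (Finset.mem_range.2 hk) hlt
  have hterm : ∀ k ∈ Finset.range (2 ^ n),
      P {ω | r ^ n < |Z ((k + 1) / 2 ^ n) ω - Z (k / 2 ^ n) ω|} ≤
        ENNReal.ofReal (K * (2⁻¹ * ρ) ^ n) := by
    intro k hk
    have hk' : (k : ℝ) + 1 ≤ 2 ^ n := by exact_mod_cast Finset.mem_range.1 hk
    refine hpair n _ ⟨by positivity, ?_⟩ _ ⟨by positivity, ?_⟩ ?_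
    · rw [div_le_one h2n]; linarith
    · rw [div_le_one h2n]; linarith
    · rw [← sub_div, add_sub_cancel_left, abs_of_pos (by positivity), inv_pow, one_div]
  calc P {ω | ¬ DyadicIncrementsLE (fun u => Z u ω) r n}
      ≤ ∑ k ∈ Finset.range (2 ^ n), ENNReal.ofReal (K * (2⁻¹ * ρ) ^ n) :=
        (measure_mono hsub).trans ((measure_biUnion_finset_le _ _).trans (Finset.sum_le_sum hterm))
    _ = ENNReal.ofReal (K * ρ ^ n) := by
        rw [Finset.sum_const, Finset.card_range, nsmul_eq_mul, ← ENNReal.ofReal_natCast,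
          ← ENNReal.ofReal_mul (by positivity)]
        congr 1
        push_cast
        rw [mul_pow, inv_pow]
        field_simp

lemma ae_tendsto_dyadicFloor {Z : ℝ → Ω → ℝ} {K ρ r : ℝ} (hρ0 : 0 ≤ ρ) (hρ1 : ρ < 1)
    (hr0 : 0 ≤ r) (hr1 : r < 1)
    (hpair : ∀ n : ℕ, ∀ u ∈ Icc (0 : ℝ) 1, ∀ v ∈ Icc (0 : ℝ) 1, |v - u| ≤ 2⁻¹ ^ n →
      P {ω | r ^ n < |Z v ω - Z u ω|} ≤ ENNReal.ofReal (K * (2⁻¹ * ρ) ^ n))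
    {u : ℝ} (hu : u ∈ Icc (0 : ℝ) 1) :
    ∀ᵐ ω ∂P, Tendsto (fun n => Z (dyadicFloor n u) ω) atTop (𝓝 (Z u ω)) := by
  have hclose : ∀ n : ℕ, |u - dyadicFloor n u| ≤ 2⁻¹ ^ n := fun n => by
    rw [abs_of_nonneg (sub_nonneg.2 (dyadicFloor_le hu.1 n))]
    exact (sub_dyadicFloor_lt n u).le
  filter_upwards [ae_eventually_notMem_of_le_geometric (by positivity) (by linarith)
    fun n => hpair n _ (dyadicFloor_mem_Icc hu n) u hu (hclose n)] with ω hω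
  refine tendsto_iff_norm_sub_tendsto_zero.2 (squeeze_zero_norm' (hω.mono fun n hn => ?_)
    (tendsto_pow_atTop_nhds_zero_of_lt_one hr0 hr1))
  rw [norm_norm, Real.norm_eq_abs, abs_sub_comm]
  exact not_lt.1 hn

theorem hasContinuousModificationOn_Icc_zero_one {Z : ℝ → Ω → ℝ} (hZ : ∀ u, Measurable (Z u))
    {α β K : ℝ} (hα : 0 < α) (hβ : 0 < β) (hK : 0 ≤ K)
    (hmom : ∀ u ∈ Icc (0 : ℝ) 1, ∀ v ∈ Icc (0 : ℝ) 1,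
      ∫⁻ ω, ENNReal.ofReal (|Z v ω - Z u ω| ^ α) ∂P ≤ ENNReal.ofReal (K * |v - u| ^ (1 + β))) :
    HasContinuousModificationOn Z P (Icc 0 1) := by
  classical
  -- `r ^ α = ρ` and `2⁻¹ ^ β = ρ ^ 2`: an increment over a step `2⁻¹ ^ n` exceeds `r ^ n` with
  -- probability at most `K (2⁻¹ ρ) ^ n`, so the `2 ^ n` steps of level `n` together give `K ρ ^ n`
  set ρ : ℝ := 2⁻¹ ^ (β / 2)
  set r : ℝ := ρ ^ α⁻¹
  have hρ0 : 0 < ρ := Real.rpow_pos_of_pos (by norm_num) _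
  have hρ1 : ρ < 1 := Real.rpow_lt_one (by norm_num) (by norm_num) (by positivity)
  have hr0 : 0 < r := Real.rpow_pos_of_pos hρ0 _
  have hr1 : r < 1 := Real.rpow_lt_one hρ0.le hρ1 (by positivity)
  have hρ : (2⁻¹ : ℝ) ^ β = ρ * ρ := by rw [← Real.rpow_add (by norm_num), add_halves]
  have hpair : ∀ n : ℕ, ∀ u ∈ Icc (0 : ℝ) 1, ∀ v ∈ Icc (0 : ℝ) 1, |v - u| ≤ 2⁻¹ ^ n →
      P {ω | r ^ n < |Z v ω - Z u ω|} ≤ ENNReal.ofReal (K * (2⁻¹ * ρ) ^ n) :=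
    fun n u hu v hv huv => measure_pow_lt_abs_le ((hZ v).sub (hZ u)).aemeasurable hα hρ0 hρ hr0
      (Real.rpow_inv_rpow hρ0.le hα.ne') ((hmom u hu v hv).trans (ENNReal.ofReal_le_ofReal
        (by gcongr)))
  set good : Ω → Prop := fun ω => ∀ᶠ n in atTop, DyadicIncrementsLE (fun u => Z u ω) r n
  refine ⟨fun u ω => if good ω then dyadicLimit (fun u => Z u ω) u else 0, fun ω => ?_,
    fun u hu => ?_⟩
  · by_cases hω : good ω
    · simpa only [if_pos hω] using continuousOn_dyadicLimit hr0.le hr1 hω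
    · simpa only [if_neg hω] using continuousOn_const
  · filter_upwards [ae_eventually_dyadicIncrementsLE hρ0.le hρ1 hpair,
      ae_tendsto_dyadicFloor hρ0.le hρ1 hr0.le hr1 hpair hu] with ω hω hZu
    obtain ⟨N, hN⟩ := eventually_atTop.1 hω
    simp only [good, if_pos hω]
    exact tendsto_nhds_unique hZu (tendsto_dyadicLimit hr0.le hr1 hN hu).1

end Kolmogorov

theorem stmt_19_general {Ω : Type*} [MeasurableSpace Ω] (P : Measure Ω)
    (T : ℝ) (hT : 0 < T)
    (X : ℝ → Ω → ℝ) (hXm : ∀ t, Measurable (X t))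
    (α β C : ℝ) (hα : 0 < α) (hβ : 0 < β) (hC : 0 < C)
    (F : ℝ → ℝ) (hFcont : ContinuousOn F (Set.Icc 0 T))
    (hFbv : BoundedVariationOn F (Set.Icc 0 T))
    (hX : ∀ s ∈ Set.Icc (0 : ℝ) T, ∀ t ∈ Set.Icc (0 : ℝ) T,
      ∫⁻ ω, ENNReal.ofReal (|X t ω - X s ω| ^ α) ∂P ≤
        ENNReal.ofReal (C * |F t - F s| ^ (1 + β))) :
    ∃ Y : ℝ → Ω → ℝ,
      (∀ ω, ContinuousOn (fun t => Y t ω) (Set.Icc 0 T)) ∧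
      ∀ t ∈ Set.Icc (0 : ℝ) T, ∀ᵐ ω ∂P, X t ω = Y t ω := by
  obtain ⟨ψ, L, hL, hψc, hψ, hFψ⟩ := hFbv.exists_bijOn_Icc_abs_sub_le hT hFcont
  set φ := Function.invFunOn ψ (Icc 0 T)
  have hφψ : InvOn φ ψ (Icc 0 T) (Icc 0 1) := hψ.invOn_invFunOn
  have hφ : MapsTo φ (Icc 0 1) (Icc 0 T) := hψ.surjOn.mapsTo_invFunOn
  refine HasContinuousModificationOn.of_comp ?_ hψc hψ.mapsTo hφψ.1
  refine hasContinuousModificationOn_Icc_zero_one (K := C * L ^ (1 + β)) (fun u => hXm _) hα hβ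
    (by positivity) fun u hu v hv => (hX _ (hφ hu) _ (hφ hv)).trans (ENNReal.ofReal_le_ofReal ?_)
  have hFuv := hFψ _ (hφ hu) _ (hφ hv)
  rw [hφψ.2 hu, hφψ.2 hv] at hFuv
  calc C * |F (φ v) - F (φ u)| ^ (1 + β) ≤ C * (L * |v - u|) ^ (1 + β) := by gcongr
    _ = C * L ^ (1 + β) * |v - u| ^ (1 + β) := by rw [Real.mul_rpow hL (abs_nonneg _)]; ring

/-- a Kolmogorov–Čentsov variant: If a real process
`(X t)_{0 ≤ t ≤ T}` satisfies `E[|X t - X s|^α] ≤ C·|F t - F s|^(1+β)` for a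
continuous function `F` of bounded variation on `[0, T]` and constants
`α, β, C > 0`, then `X` admits a modification whose paths are all continuous
on `[0, T]`. -/
theorem stmt_19 {Ω : Type*} [MeasurableSpace Ω] (P : Measure Ω)
    [IsProbabilityMeasure P] (T : ℝ) (hT : 0 < T)
    (X : ℝ → Ω → ℝ) (hXm : ∀ t, Measurable (X t))
    (α β C : ℝ) (hα : 0 < α) (hβ : 0 < β) (hC : 0 < C)
    (F : ℝ → ℝ) (hFcont : ContinuousOn F (Set.Icc 0 T))
    (hFbv : BoundedVariationOn F (Set.Icc 0 T))
    (hX : ∀ s ∈ Set.Icc (0 : ℝ) T, ∀ t ∈ Set.Icc (0 : ℝ) T,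
      ∫⁻ ω, ENNReal.ofReal (|X t ω - X s ω| ^ α) ∂P ≤
        ENNReal.ofReal (C * |F t - F s| ^ (1 + β))) :
    ∃ Y : ℝ → Ω → ℝ,
      (∀ ω, ContinuousOn (fun t => Y t ω) (Set.Icc 0 T)) ∧
      ∀ t ∈ Set.Icc (0 : ℝ) T, ∀ᵐ ω ∂P, X t ω = Y t ω :=
  stmt_19_general P T hT X hXm α β C hα hβ hC F hFcont hFbv hX
end
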